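/- arXiv:2210.11962 — 9 statements merged into one kernel-verified Lean document; each statement's English description precedes it below -/
import Mathlib

section
/- If κ is an uncountable cardinal with cofinality ω, then every cofinal family F in [κ]^ω has cardinality at least κ⁺ (the successor cardinal of κ). -/
/-!
Suppose `#F ≤ κ`. Since `cf κ = ω`, `F` is a countable union of subfamilies `Fₙ` with `#Fₙ < κ`,
and as `κ` is uncountable each `⋃ Fₙ` has size `< κ`, so it misses some point `xₙ`. A countably
infinite set containing all the `xₙ` then lies in no member of any `Fₙ`, i.e. in no member of `F`.
-/

open Cardinal Set

universe u

theorem Cardinal.exists_iUnion_eq_univ_mk_lt_of_cof_eq_aleph0 {κ : Cardinal.{u}}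
    (hκ : κ.ord.cof = ℵ₀) {β : Type u} (hβ : #β ≤ κ) :
    ∃ B : ℕ → Set β, ⋃ n, B n = Set.univ ∧ ∀ n, #(B n) < κ := by
  -- Pull back the initial segments below a cofinal `ω`-sequence in the initial well-order of `κ`.
  obtain ⟨s, hs_cofinal, hs_card⟩ := Order.exists_cof_eq κ.ord.ToType
  rw [Ordinal.cof_toType, hκ] at hs_card
  obtain ⟨f, rfl⟩ : ∃ f : ℕ → κ.ord.ToType, s = range f :=
    (Set.countable_coe_iff.1 (mk_le_aleph0_iff.1 hs_card.le)).exists_eq_range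
      (nonempty_coe_sort.1 (mk_ne_zero_iff.1 (hs_card ▸ aleph0_ne_zero)))
  obtain ⟨g⟩ : Nonempty (β ↪ κ.ord.ToType) := by rwa [← le_def, mk_ord_toType]
  have hκ_inf : ℵ₀ ≤ κ := by
    simpa [hκ] using Ordinal.cof_le_card κ.ord
  refine ⟨fun n => g ⁻¹' Iic (f n), ?_, fun n => ?_⟩
  · refine eq_univ_of_forall fun b => mem_iUnion.2 ?_
    obtain ⟨_, ⟨n, rfl⟩, hn⟩ := hs_cofinal (g b)
    exact ⟨n, hn⟩
  · calc #(g ⁻¹' Iic (f n)) ≤ #(Iic (f n)) := mk_preimage_of_injective _ _ g.injective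
      _ = #(insert (f n) (Iio (f n)) : Set _) := by rw [Iio_insert]
      _ ≤ #(Iio (f n)) + 1 := mk_insert_le
      _ < κ := add_lt_of_lt hκ_inf
          ((mk_Iio_lt _ (by rw [mk_ord_toType, Ordinal.type_toType])).trans_eq (mk_ord_toType κ))
          (one_lt_aleph0.trans_le hκ_inf)

theorem Cardinal.mk_sUnion_lt_of_countable {α : Type u} {κ : Cardinal.{u}} {S : Set (Set α)}
    (hκ : ℵ₀ < κ) (hS : #S < κ) (h_countable : ∀ Y ∈ S, Y.Countable) : #(⋃₀ S) < κ :=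
  (mk_sUnion_le S).trans_lt <| mul_lt_of_lt hκ.le hS <|
    (ciSup_le' fun Y : S => mk_le_aleph0_iff.2 (h_countable Y Y.2).to_subtype).trans_lt hκ

theorem Set.exists_countable_infinite_forall_not_subset {α : Type*} [Infinite α]
    (U : ℕ → Set α) (hU : ∀ n, U n ≠ Set.univ) :
    ∃ X : Set α, X.Countable ∧ X.Infinite ∧ ∀ n, ¬ X ⊆ U n := by
  choose x hx using fun n => (ne_univ_iff_exists_notMem (U n)).1 (hU n)
  -- The `xₙ` need not be distinct; a fixed copy of `ℕ` is added to make `X` infinite.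
  let e := _root_.Infinite.natEmbedding α
  refine ⟨range x ∪ range e, (countable_range _).union (countable_range _),
    (infinite_range_of_injective e.injective).mono subset_union_right,
    fun n hn => hx n (hn (Or.inl ⟨n, rfl⟩))⟩

/-- If κ is an uncountable cardinal of cofinality ω, then every cofinal family in
[κ]^ω has cardinality at least κ⁺. Here κ is realized as the cardinality of a type α. -/
theorem stmt_1 {α : Type*} (hκ : ℵ₀ < #α) (hcf : (#α).ord.cof = ℵ₀)
    (F : Set (Set α))
    (hF : ∀ Y ∈ F, Y.Countable ∧ Y.Infinite)
    (hcof : ∀ X : Set α, X.Countable → X.Infinite → ∃ Y ∈ F, X ⊆ Y) :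
    Order.succ (#α) ≤ #F := by
  have : Infinite α := infinite_iff.2 hκ.le
  rw [Order.succ_le_iff]
  by_contra! hF_le
  obtain ⟨B, hB_univ, hB_lt⟩ := exists_iUnion_eq_univ_mk_lt_of_cof_eq_aleph0 hcf hF_le
  let U n := ⋃₀ (Subtype.val '' B n)
  have hU n : U n ≠ Set.univ := by
    intro hn
    have : #(U n) < #α := mk_sUnion_lt_of_countable hκ (mk_image_le.trans_lt (hB_lt n))
      (by rintro _ ⟨Y, -, rfl⟩; exact (hF Y Y.2).1)
    rw [hn, mk_univ] at this
    exact this.false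
  obtain ⟨X, hX_countable, hX_infinite, hX⟩ := exists_countable_infinite_forall_not_subset U hU
  obtain ⟨Y, hY, hXY⟩ := hcof X hX_countable hX_infinite
  obtain ⟨n, hn⟩ := mem_iUnion.1 (hB_univ ▸ mem_univ (⟨Y, hY⟩ : F))
  exact hX n (hXY.trans (subset_sUnion_of_mem (mem_image_of_mem Subtype.val hn)))
end

section
/- If there is a partition of ℝ into κ Borel sets for an uncountable cardinal κ, and there exists a cofinal Kurepa family in [κ]^ω, then there is a partition of ℝ into cf[κ]^ω nonempty Borel sets, where cf[κ]^ω is the minimum cardinality of a cofinal family in [κ]^ω. -/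
open Cardinal Set

/-- Core construction: given a Borel partition of ℝ indexed by an uncountable type ι and a
cofinal Kurepa family `F` in `[ι]^ω`, we produce a Borel partition `Q` of ℝ together with a
cofinal subfamily `F''` of `F` such that `#Q = #F''` and `#F''` is at most `#G * ℵ₀` for every
cofinal family `G` of countable sets. -/
theorem aux_partition (ι : Type) [Uncountable ι] (B : ι → Set ℝ)
    (hBd : ∀ i j : ι, i ≠ j → Disjoint (B i) (B j))
    (hBne : ∀ i, (B i).Nonempty)
    (hBm : ∀ i, MeasurableSet (B i))
    (hBcov : ∀ x : ℝ, ∃ i, x ∈ B i)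
    (F : Set (Set ι))
    (hF1 : ∀ Y ∈ F, Y.Countable ∧ Y.Infinite)
    (hF2 : ∀ X : Set ι, X.Countable → X.Infinite → ∃ Y ∈ F, X ⊆ Y)
    (hF3 : ∀ X : Set ι, X.Countable → {Z : Set ι | ∃ Y ∈ F, Z = X ∩ Y}.Countable) :
    ∃ (Q : Set (Set ℝ)) (F'' : Set (Set ι)),
      (∀ p ∈ Q, ∀ q ∈ Q, p ≠ q → Disjoint p q) ∧
      (∀ p ∈ Q, p.Nonempty ∧ MeasurableSet p) ∧
      ⋃₀ Q = Set.univ ∧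
      (∀ Y ∈ F'', Y.Countable ∧ Y.Infinite) ∧
      (∀ X : Set ι, X.Countable → X.Infinite → ∃ Y ∈ F'', X ⊆ Y) ∧
      #Q = #F'' ∧
      (∀ G : Set (Set ι), (∀ Y ∈ G, Y.Countable) →
        (∀ X : Set ι, X.Countable → X.Infinite → ∃ Y ∈ G, X ⊆ Y) → #F'' ≤ #G * ℵ₀) := by
  classical
  -- a measurable isomorphism ℝ ≃ ℝ^ℕ
  have hinj : Function.Injective (fun (x : ℝ) => (fun _ : ℕ => x)) := fun a b h => congrFun h 0
  haveI : Uncountable (ℕ → ℝ) := hinj.uncountable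
  let Φ : ℝ ≃ᵐ (ℕ → ℝ) :=
    PolishSpace.measurableEquivOfNotCountable (not_countable) (not_countable)
  -- the partition map
  choose cval hcval using hBcov
  have c_eq : ∀ (y : ℝ) (i : ι), y ∈ B i → cval y = i := by
    intro y i hy
    by_contra hne'
    exact (Set.disjoint_left.mp (hBd _ _ hne') (hcval y)) hy
  -- the sets D Z
  let D : Set ι → Set ℝ := fun Z => {x : ℝ | ∀ n : ℕ, cval (Φ x n) ∈ Z}
  have Dmeas : ∀ Z : Set ι, Z.Countable → MeasurableSet (D Z) := by
    intro Z hZ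
    have hU : MeasurableSet (⋃ i ∈ Z, B i) := MeasurableSet.biUnion hZ fun i _ => hBm i
    have hDeq : D Z = ⋂ n : ℕ, (fun x : ℝ => Φ x n) ⁻¹' (⋃ i ∈ Z, B i) := by
      ext x
      simp only [D, mem_setOf_eq, mem_iInter, mem_preimage, mem_iUnion]
      constructor
      · intro h n; exact ⟨cval (Φ x n), h n, hcval _⟩
      · intro h n; obtain ⟨i, hiZ, hBi⟩ := h n; rwa [c_eq _ _ hBi]
    rw [hDeq]
    exact MeasurableSet.iInter fun n =>
      ((measurable_pi_apply n).comp Φ.measurable) hU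
  have Dmono : ∀ Z Z' : Set ι, Z ⊆ Z' → D Z ⊆ D Z' := by
    intro Z Z' h x hx n; exact h (hx n)
  have Dreal : ∀ f : ℕ → ι, ∃ x : ℝ, ∀ n, cval (Φ x n) = f n := by
    intro f
    choose y hy using fun n => hBne (f n)
    refine ⟨Φ.symm y, fun n => ?_⟩
    rw [Φ.apply_symm_apply]
    exact c_eq _ _ (hy n)
  -- the well order on `Set ι`
  let r : Set ι → Set ι → Prop := WellOrderingRel
  have hwf : WellFounded r := IsWellFounded.wf
  -- the pruned family : sets that are not strict subsets of r-earlier members of F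
  let F'' : Set (Set ι) := {Z | Z ∈ F ∧ ∀ Z', Z' ∈ F → r Z' Z → ¬ Z ⊂ Z'}
  have hF''F : F'' ⊆ F := fun Z hZ => hZ.1
  -- every member of F is contained in a member of F''
  have cov'' : ∀ Z ∈ F, ∃ Z'' ∈ F'', Z ⊆ Z'' := by
    intro Z hZ
    induction Z using hwf.induction with
    | _ X IH =>
      by_cases hX'' : X ∈ F''
      · exact ⟨X, hX'', subset_rfl⟩
      · have hex : ∃ Z', Z' ∈ F ∧ r Z' X ∧ X ⊂ Z' := by
          by_contra hcon
          push_neg at hcon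
          exact hX'' ⟨hZ, fun Z' h1 h2 => hcon Z' h1 h2⟩
        obtain ⟨Z', hZ'F, hrel, hsub⟩ := hex
        obtain ⟨Z'', h1, h2⟩ := IH Z' hrel hZ'F
        exact ⟨Z'', h1, hsub.subset.trans h2⟩
  have hF''1 : ∀ Y ∈ F'', Y.Countable ∧ Y.Infinite := fun Y hY => hF1 Y (hF''F hY)
  have hF''2 : ∀ X : Set ι, X.Countable → X.Infinite → ∃ Y ∈ F'', X ⊆ Y := by
    intro X hc hi
    obtain ⟨Y, hYF, hXY⟩ := hF2 X hc hi
    obtain ⟨Z'', hZ''F, hYZ⟩ := cov'' Y hYF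
    exact ⟨Z'', hZ''F, hXY.trans hYZ⟩
  -- key property : no member of F'' is included in an r-earlier member of F''
  have key : ∀ Z ∈ F'', ∀ Z' ∈ F'', r Z' Z → ¬ Z ⊆ Z' := by
    intro Z hZ Z' hZ' hrel hsub
    have hne' : Z ≠ Z' := by
      rintro rfl
      exact irrefl_of r Z hrel
    exact hZ.2 Z' (hF''F hZ') hrel (ssubset_iff_subset_ne.2 ⟨hsub, hne'⟩)
  -- the countable "menu" of earlier traces
  let 𝒲 : Set ι → Set (Set ι) := fun Z => {W | ∃ Z', Z' ∈ F'' ∧ r Z' Z ∧ W = Z ∩ Z'}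
  have 𝒲count : ∀ Z ∈ F'', (𝒲 Z).Countable := by
    intro Z hZ
    refine Set.Countable.mono ?_ (hF3 Z (hF''1 Z hZ).1)
    rintro W ⟨Z', hZ', _, rfl⟩
    exact ⟨Z', hF''F hZ', rfl⟩
  have 𝒲sub : ∀ Z, ∀ W ∈ 𝒲 Z, W ⊆ Z := by
    rintro Z W ⟨Z', _, _, rfl⟩
    exact inter_subset_left
  have 𝒲ne : ∀ Z ∈ F'', ∀ W ∈ 𝒲 Z, (Z \ W).Nonempty := by
    rintro Z hZ W ⟨Z', hZ', hrel, rfl⟩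
    obtain ⟨i, hiZ, hiZ'⟩ := not_subset.mp (key Z hZ Z' hZ' hrel)
    exact ⟨i, hiZ, fun h => hiZ' h.2⟩
  -- the pieces
  let Qp : Set ι → Set ℝ := fun Z => D Z \ ⋃ W ∈ 𝒲 Z, D W
  have Qpmeas : ∀ Z ∈ F'', MeasurableSet (Qp Z) := by
    intro Z hZ
    refine (Dmeas Z (hF''1 Z hZ).1).diff ?_
    exact MeasurableSet.biUnion (𝒲count Z hZ)
      (fun W hW => Dmeas W ((hF''1 Z hZ).1.mono (𝒲sub Z W hW)))
  have Qpne : ∀ Z ∈ F'', (Qp Z).Nonempty := by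
    intro Z hZ
    have hcnt : (insert (∅ : Set ι) (𝒲 Z)).Countable := (𝒲count Z hZ).insert ∅
    obtain ⟨g, hg⟩ := hcnt.exists_eq_range ⟨∅, mem_insert _ _⟩
    have hgood : ∀ n : ℕ, (Z \ g n).Nonempty := by
      intro n
      have hmem : g n ∈ insert (∅ : Set ι) (𝒲 Z) := by rw [hg]; exact mem_range_self n
      rcases hmem with h | h
      · rw [h, diff_empty]
        exact (hF''1 Z hZ).2.nonempty
      · exact 𝒲ne Z hZ _ h
    choose f hf using hgood
    obtain ⟨x, hx⟩ := Dreal f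
    refine ⟨x, ⟨fun n => by rw [hx n]; exact (hf n).1, ?_⟩⟩
    intro hmem
    simp only [mem_iUnion] at hmem
    obtain ⟨W, hW, hxW⟩ := hmem
    have : W ∈ insert (∅ : Set ι) (𝒲 Z) := mem_insert_of_mem _ hW
    rw [hg] at this
    obtain ⟨n, rfl⟩ := this
    have := hxW n
    rw [hx n] at this
    exact (hf n).2 this
  have Qpcov : ∀ x : ℝ, ∃ Z ∈ F'', x ∈ Qp Z := by
    intro x
    obtain ⟨Y₀, hY₀F, hY₀⟩ : ∃ Y ∈ F'', x ∈ D Y := by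
      have hXc : ((range fun n => cval (Φ x n)) ∪ range (Infinite.natEmbedding ι)).Countable :=
        (countable_range _).union (countable_range _)
      have hXi : ((range fun n => cval (Φ x n)) ∪ range (Infinite.natEmbedding ι)).Infinite :=
        Set.Infinite.mono subset_union_right
          (Set.infinite_range_of_injective (Infinite.natEmbedding ι).injective)
      obtain ⟨Y, hYF, hXY⟩ := hF''2 _ hXc hXi
      exact ⟨Y, hYF, fun n => hXY (mem_union_left _ (mem_range_self n))⟩
    obtain ⟨Z, hZT, hmin⟩ := hwf.has_min {Z | Z ∈ F'' ∧ x ∈ D Z} ⟨Y₀, hY₀F, hY₀⟩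
    refine ⟨Z, hZT.1, hZT.2, ?_⟩
    intro hmem
    simp only [mem_iUnion] at hmem
    obtain ⟨W, ⟨Z', hZ', hrel, rfl⟩, hxW⟩ := hmem
    exact hmin Z' ⟨hZ', Dmono _ _ inter_subset_right hxW⟩ hrel
  have Qpdisj : ∀ Z ∈ F'', ∀ Z' ∈ F'', Z ≠ Z' → Disjoint (Qp Z) (Qp Z') := by
    have main : ∀ Z ∈ F'', ∀ Z' ∈ F'', r Z' Z → Disjoint (Qp Z) (Qp Z') := by
      intro Z hZ Z' hZ' hrel
      rw [Set.disjoint_left]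
      intro x hxZ hxZ'
      have hxint : x ∈ D (Z ∩ Z') := fun n => ⟨hxZ.1 n, hxZ'.1 n⟩
      exact hxZ.2 (mem_biUnion (⟨Z', hZ', hrel, rfl⟩ : Z ∩ Z' ∈ 𝒲 Z) hxint)
    intro Z hZ Z' hZ' hne'
    rcases trichotomous_of r Z Z' with h | h | h
    · exact (main Z' hZ' Z hZ h).symm
    · exact absurd h hne'
    · exact main Z hZ Z' hZ' h
  -- assemble
  refine ⟨Qp '' F'', F'', ?_, ?_, ?_, hF''1, hF''2, ?_, ?_⟩
  · rintro p ⟨Z, hZ, rfl⟩ q ⟨Z', hZ', rfl⟩ hpq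
    exact Qpdisj Z hZ Z' hZ' (fun h => hpq (by rw [h]))
  · rintro p ⟨Z, hZ, rfl⟩
    exact ⟨Qpne Z hZ, Qpmeas Z hZ⟩
  · apply eq_univ_of_forall
    intro x
    obtain ⟨Z, hZ, hx⟩ := Qpcov x
    exact ⟨Qp Z, ⟨Z, hZ, rfl⟩, hx⟩
  · apply Cardinal.mk_image_eq_of_injOn
    intro Z hZ Z' hZ' heq
    by_contra hne'
    obtain ⟨x, hx⟩ := Qpne Z hZ
    have hx' : x ∈ Qp Z' := heq ▸ hx
    exact Set.disjoint_left.mp (Qpdisj Z hZ Z' hZ' hne') hx hx'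
  · intro G hGc hGcof
    have hcov : ∀ Z ∈ F'', ∃ T ∈ G, Z ⊆ T :=
      fun Z hZ => hGcof Z (hF''1 Z hZ).1 (hF''1 Z hZ).2
    have hsub : F'' ⊆ ⋃ T ∈ G, {Z | Z ∈ F'' ∧ Z ⊆ T} := by
      intro Z hZ
      obtain ⟨T, hTG, hZT⟩ := hcov Z hZ
      exact mem_biUnion hTG ⟨hZ, hZT⟩
    calc #F'' ≤ #(⋃ T ∈ G, {Z | Z ∈ F'' ∧ Z ⊆ T}) := Cardinal.mk_le_mk_of_subset hsub
    _ = #(⋃ T : G, {Z | Z ∈ F'' ∧ Z ⊆ (T : Set ι)}) := by rw [iUnion_coe_set]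
    _ ≤ #G * ⨆ T : G, #{Z | Z ∈ F'' ∧ Z ⊆ (T : Set ι)} := Cardinal.mk_iUnion_le _
    _ ≤ #G * ℵ₀ := by
        refine mul_le_mul_right (ciSup_le' ?_) _
        intro T
        rw [Cardinal.mk_le_aleph0_iff, Set.countable_coe_iff]
        have hfib : {Z | Z ∈ F'' ∧ Z ⊆ (T : Set ι)}.Countable := by
          refine Set.Countable.mono ?_ (hF3 (T : Set ι) (hGc T T.2))
          rintro Z ⟨hZF, hZT⟩
          exact ⟨Z, hF''F hZF, (inter_eq_self_of_subset_right hZT).symm⟩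
        exact hfib

/-- If ℝ can be partitioned into κ Borel sets (κ uncountable) and there is a cofinal
Kurepa family in [κ]^ω, then ℝ can be partitioned into cf[κ]^ω Borel sets. -/
theorem stmt_7 (κ : Cardinal) (hκ : ℵ₀ < κ)
    (P : Set (Set ℝ))
    (hdisj : ∀ p ∈ P, ∀ q ∈ P, p ≠ q → Disjoint p q)
    (hne : ∀ p ∈ P, p.Nonempty)
    (hBorel : ∀ p ∈ P, MeasurableSet p)
    (hcover : ⋃₀ P = Set.univ)
    (hcard : #P = κ)
    (hKF : ∃ F : Set (Set κ.out), (∀ Y ∈ F, Y.Countable ∧ Y.Infinite) ∧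
      (∀ X : Set κ.out, X.Countable → X.Infinite → ∃ Y ∈ F, X ⊆ Y) ∧
      (∀ X : Set κ.out, X.Countable → {Z : Set κ.out | ∃ Y ∈ F, Z = X ∩ Y}.Countable)) :
    ∃ Q : Set (Set ℝ),
      (∀ p ∈ Q, ∀ q ∈ Q, p ≠ q → Disjoint p q) ∧
      (∀ p ∈ Q, p.Nonempty ∧ MeasurableSet p) ∧
      ⋃₀ Q = Set.univ ∧
      #Q = sInf {c : Cardinal | ∃ G : Set (Set κ.out),
        (∀ Y ∈ G, Y.Countable ∧ Y.Infinite) ∧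
        (∀ X : Set κ.out, X.Countable → X.Infinite → ∃ Y ∈ G, X ⊆ Y) ∧ #G = c} := by
  classical
  obtain ⟨F, hF1, hF2, hF3⟩ := hKF
  have hκout : #(κ.out) = κ := Cardinal.mk_out κ
  haveI : Uncountable κ.out := by
    have h1 : ¬ (#(κ.out) ≤ ℵ₀) := by rw [hκout]; exact not_le.2 hκ
    rw [Cardinal.mk_le_aleph0_iff] at h1
    exact not_countable_iff.mp h1
  -- transport the partition to an indexed family over κ.out
  have hPk : #(↑P) = #(κ.out) := by rw [hcard, hκout]
  obtain ⟨e⟩ := Cardinal.eq.mp hPk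
  set B : κ.out → Set ℝ := fun i => ((e.symm i : ↑P) : Set ℝ) with hB
  have hBmem : ∀ i, (B i) ∈ P := fun i => (e.symm i).2
  have hBd : ∀ i j : κ.out, i ≠ j → Disjoint (B i) (B j) := by
    intro i j hij
    refine hdisj _ (hBmem i) _ (hBmem j) ?_
    intro h
    exact hij (by simpa using e.symm.injective (Subtype.ext h))
  have hBne : ∀ i, (B i).Nonempty := fun i => hne _ (hBmem i)
  have hBm : ∀ i, MeasurableSet (B i) := fun i => hBorel _ (hBmem i)
  have hBcov : ∀ x : ℝ, ∃ i, x ∈ B i := by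
    intro x
    have hx : x ∈ ⋃₀ P := by rw [hcover]; trivial
    obtain ⟨p, hp, hxp⟩ := hx
    refine ⟨e ⟨p, hp⟩, ?_⟩
    show x ∈ B (e ⟨p, hp⟩)
    rw [hB]
    simp only [e.symm_apply_apply]
    exact hxp
  obtain ⟨Q, F'', hQd, hQnm, hQcov, hF''1, hF''2, hQcard, hbound⟩ :=
    aux_partition κ.out B hBd hBne hBm hBcov F hF1 hF2 hF3
  refine ⟨Q, hQd, hQnm, hQcov, ?_⟩
  have hSne : {c : Cardinal | ∃ G : Set (Set κ.out),
      (∀ Y ∈ G, Y.Countable ∧ Y.Infinite) ∧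
      (∀ X : Set κ.out, X.Countable → X.Infinite → ∃ Y ∈ G, X ⊆ Y) ∧ #G = c}.Nonempty :=
    ⟨#F, F, hF1, hF2, rfl⟩
  obtain ⟨G₀, hG₀1, hG₀2, hG₀card⟩ := csInf_mem hSne
  have hG₀inf : ℵ₀ ≤ #G₀ := by
    by_contra hlt
    push_neg at hlt
    have hfin : G₀.Finite := Cardinal.lt_aleph0_iff_set_finite.mp hlt
    have hcnt : (⋃₀ G₀).Countable :=
      Set.Countable.sUnion hfin.countable (fun t ht => (hG₀1 t ht).1)
    have hex : ∃ i : κ.out, i ∉ ⋃₀ G₀ := by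
      by_contra h
      push_neg at h
      exact Set.not_countable_univ (hcnt.mono (fun i _ => h i) : _)
    obtain ⟨i, hi⟩ := hex
    have hX : (insert i (range (Infinite.natEmbedding κ.out))).Countable :=
      (countable_range _).insert i
    have hXi : (insert i (range (Infinite.natEmbedding κ.out))).Infinite :=
      ((Set.infinite_range_of_injective (Infinite.natEmbedding κ.out).injective).mono
        (subset_insert _ _))
    obtain ⟨Y, hYG, hXY⟩ := hG₀2 _ hX hXi
    exact hi ⟨Y, hYG, hXY (mem_insert _ _)⟩
  rw [hQcard]
  refine le_antisymm ?_ (csInf_le' ⟨F'', hF''1, hF''2, rfl⟩)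
  have h2 : #F'' ≤ #G₀ * ℵ₀ := hbound G₀ (fun Y hY => (hG₀1 Y hY).1) hG₀2
  have h3 : #G₀ * ℵ₀ = #G₀ :=
    Cardinal.mul_eq_left hG₀inf hG₀inf Cardinal.aleph0_ne_zero
  rw [h3, hG₀card] at h2
  exact h2
end

section
/- Let κ be an uncountable cardinal, P a set with |P| = κ, and K a cofinal Kurepa family in [P]^ω. For each A ∈ K let X_A = A^ω ⊆ P^ω, fix a well-ordering ≺ of K, and let Y_A = X_A \ ⋃{X_B : B ≺ A}. Then the nonempty sets Y_A form a partition of P^ω, and exactly |K| of the sets Y_A are nonempty. -/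
/-!
A sequence `x` lies in `Y_A` exactly when `A` is the `≺`-least member of `K` containing the range
of `x`; cofinality makes such an `A` exist, so the `Y_A` partition `P^ω`. For the count, send each
`A ∈ K` to the `≺`-least `B ∈ K` with `A ⊆ B`: an enumeration of `A` then lies in `Y_B`, so `B`
indexes a nonempty piece. Every `A` in the fibre over `B` equals its trace `B ∩ A`, so the Kurepa
property makes the fibres countable, while `K` is uncountable because its countable members cover
the uncountable set `P`. Hence `|K|` pieces are nonempty.
-/

open Cardinal Set Function

universe u

def firstEntry {ι β : Type*} (r : ι → ι → Prop) (X : ι → Set β) (i : ι) : Set β :=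
  X i \ ⋃ (j) (_ : r j i), X j

section FirstEntry

variable {ι β : Type*} (r : ι → ι → Prop) (X : ι → Set β)

theorem disjoint_firstEntry_of_rel {i j : ι} (h : r i j) :
    Disjoint (firstEntry r X i) (firstEntry r X j) :=
  disjoint_left.2 fun _ hi hj => hj.2 (mem_iUnion₂.2 ⟨i, h, hi.1⟩)

theorem pairwise_disjoint_firstEntry [Std.Trichotomous r] :
    Pairwise (Disjoint on (firstEntry r X)) := by
  intro i j hne
  rcases trichotomous_of r i j with h | h | h
  · exact disjoint_firstEntry_of_rel r X h
  · exact absurd h hne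
  · exact (disjoint_firstEntry_of_rel r X h).symm

theorem iUnion_firstEntry [IsWellFounded ι r] : ⋃ i, firstEntry r X i = ⋃ i, X i := by
  refine Subset.antisymm (iUnion_mono fun i => sdiff_subset) fun x hx => ?_
  obtain ⟨i, hi, hmin⟩ := (IsWellFounded.wf (r := r)).has_min {i | x ∈ X i} (mem_iUnion.1 hx)
  exact mem_iUnion.2 ⟨i, hi, fun hx' =>
    let ⟨j, hji, hj⟩ := mem_iUnion₂.1 hx'
    hmin j hj hji⟩

end FirstEntry

theorem Cardinal.mk_le_of_countable_preimage {α β : Type u} {f : α → β} (hα : ℵ₀ < #α)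
    (hf : ∀ b, (f ⁻¹' {b}).Countable) : #α ≤ #β := by
  have hle : #α ≤ #β * ℵ₀ :=
    mk_le_mk_mul_of_mk_preimage_le f fun b => le_aleph0_iff_set_countable.2 (hf b)
  have hβ : ℵ₀ ≤ #β := by
    by_contra! hβ
    exact hα.not_ge (hle.trans ((mul_le_mul' hβ.le le_rfl).trans_eq aleph0_mul_aleph0))
  rwa [mul_aleph0_eq hβ] at hle

section CofinalFamily

variable {α : Type*} {K : Set (Set α)}

theorem exists_mem_superset_of_countable [Infinite α]
    (hcof : ∀ X : Set α, X.Countable → X.Infinite → ∃ A ∈ K, X ⊆ A)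
    {X : Set α} (hX : X.Countable) : ∃ A ∈ K, X ⊆ A := by
  obtain ⟨A, hA, hXA⟩ := hcof (X ∪ range (Infinite.natEmbedding α))
    (hX.union (countable_range _))
    ((infinite_range_of_injective (Infinite.natEmbedding α).injective).mono subset_union_right)
  exact ⟨A, hA, subset_union_left.trans hXA⟩

theorem aleph0_lt_mk_of_sUnion_eq_univ (hα : ℵ₀ < #α) (hK : ⋃₀ K = Set.univ)
    (hcount : ∀ A ∈ K, A.Countable) : ℵ₀ < #K := by
  by_contra! hle
  have : (Set.univ : Set α).Countable := hK ▸ (le_aleph0_iff_set_countable.1 hle).sUnion hcount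
  exact hα.not_ge (mk_le_aleph0_iff.2 (countable_univ_iff.1 this))

variable (r : K → K → Prop) [IsWellFounded K r]

noncomputable def minSuperset (A : K) : K :=
  (IsWellFounded.wf (r := r)).min {B : K | (A : Set α) ⊆ B} ⟨A, Subset.refl _⟩

theorem subset_minSuperset (A : K) : (A : Set α) ⊆ minSuperset r A :=
  (IsWellFounded.wf (r := r)).min_mem {B : K | (A : Set α) ⊆ B} _

theorem firstEntry_minSuperset_nonempty {A : K} (hA : (A : Set α).Countable)
    (hne : (A : Set α).Nonempty) :
    (firstEntry r (fun B : K => {x : ℕ → α | ∀ n, x n ∈ (B : Set α)})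
      (minSuperset r A)).Nonempty := by
  obtain ⟨e, he⟩ := hA.exists_eq_range hne
  refine ⟨e, fun n => subset_minSuperset r A (he ▸ mem_range_self n), fun hmem => ?_⟩
  obtain ⟨B, hB, heB⟩ := mem_iUnion₂.1 hmem
  have hAB : (A : Set α) ⊆ B := he ▸ range_subset_iff.2 heB
  exact (IsWellFounded.wf (r := r)).not_lt_min {B : K | (A : Set α) ⊆ B} hAB hB

theorem countable_setOf_minSuperset_eq
    {B : K} (htrace : {Z : Set α | ∃ A ∈ K, Z = (B : Set α) ∩ A}.Countable) :
    {A : K | minSuperset r A = B}.Countable := by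
  refine MapsTo.countable_of_injOn (f := fun A : K => (B : Set α) ∩ A)
    (t := {Z : Set α | ∃ A ∈ K, Z = (B : Set α) ∩ A})
    (fun A _ => ⟨A, A.2, rfl⟩) ?_ htrace
  have hsub : ∀ A : K, minSuperset r A = B → (B : Set α) ∩ A = A := fun A hA =>
    inter_eq_self_of_subset_right (hA ▸ subset_minSuperset r A)
  intro A hA A' hA' h
  exact Subtype.ext ((hsub A hA).symm.trans (h.trans (hsub A' hA')))

end CofinalFamily

/-- Given a set P of uncountable cardinality κ and a cofinal Kurepa family K in
[P]^ω, well-ordered by ≺, the nonempty sets Y_A = A^ω \ ⋃_{B ≺ A} B^ω form a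
partition of P^ω, and exactly |K| of them are nonempty. -/
theorem stmt_8 {α : Type*} (hα : ℵ₀ < #α)
    (K : Set (Set α))
    (hmem : ∀ A ∈ K, A.Countable ∧ A.Infinite)
    (hcof : ∀ X : Set α, X.Countable → X.Infinite → ∃ A ∈ K, X ⊆ A)
    (hKurepa : ∀ X : Set α, X.Countable → {Z : Set α | ∃ A ∈ K, Z = X ∩ A}.Countable)
    (r : K → K → Prop) [IsWellOrder K r]
    (Y : K → Set (ℕ → α))
    (hY : ∀ A : K, Y A = {x : ℕ → α | ∀ n, x n ∈ (A : Set α)} \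
      ⋃ (B : K) (_ : r B A), {x : ℕ → α | ∀ n, x n ∈ (B : Set α)}) :
    (∀ A B : K, A ≠ B → Disjoint (Y A) (Y B)) ∧
    (⋃ A : K, Y A) = Set.univ ∧
    #{A : K // (Y A).Nonempty} = #K := by
  have : Infinite α := Cardinal.infinite_iff.2 hα.le
  obtain rfl : Y = firstEntry r (fun A : K => {x : ℕ → α | ∀ n, x n ∈ (A : Set α)}) := funext hY
  refine ⟨fun _ _ hne => pairwise_disjoint_firstEntry r _ hne, ?_, ?_⟩
  · refine (iUnion_firstEntry r _).trans (eq_univ_of_forall fun x => ?_)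
    obtain ⟨A, hA, hxA⟩ := exists_mem_superset_of_countable hcof (countable_range x)
    exact mem_iUnion.2 ⟨⟨A, hA⟩, fun n => hxA (mem_range_self n)⟩
  have hcover : ⋃₀ K = Set.univ := eq_univ_of_forall fun a =>
    let ⟨A, hA, haA⟩ := exists_mem_superset_of_countable hcof (countable_singleton a)
    ⟨A, hA, haA rfl⟩
  have hK : ℵ₀ < #K := aleph0_lt_mk_of_sUnion_eq_univ hα hcover fun A hA => (hmem A hA).1
  refine le_antisymm (mk_subtype_le _) (mk_le_of_countable_preimage
    (f := fun A : K => ⟨minSuperset r A, firstEntry_minSuperset_nonempty r (hmem A A.2).1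
      (hmem A A.2).2.nonempty⟩) hK fun B => ?_)
  have hfibre := countable_setOf_minSuperset_eq r (hKurepa _ (hmem B.1 B.1.2).1)
  exact hfibre.mono fun A (hA : _ = B) => congrArg Subtype.val hA
end

section
/- Let K be a Kurepa family in [P]^ω with a well-ordering ≺, and fix A ∈ K. Then there exists a countable subfamily G ⊆ {B ∈ K : B ≺ A} such that A^ω \ ⋃{B^ω : B ∈ K, B ≺ A} = A^ω \ ⋃{B^ω : B ∈ G}, where for C ⊆ P, C^ω = {x : ω → P : x(n) ∈ C for all n}. -/
open Cardinal Set

/-- If K is a Kurepa family in [P]^ω well-ordered by ≺ and A ∈ K, then there is a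
countable G ⊆ {B ∈ K : B ≺ A} with
A^ω \ ⋃_{B ≺ A} B^ω = A^ω \ ⋃_{B ∈ G} B^ω. -/
theorem stmt_10 {α : Type*}
    (K : Set (Set α))
    (hmem : ∀ A ∈ K, A.Countable ∧ A.Infinite)
    (hKurepa : ∀ X : Set α, X.Countable → {Z : Set α | ∃ B ∈ K, Z = X ∩ B}.Countable)
    (r : K → K → Prop) [IsWellOrder K r]
    (A : K) :
    ∃ G : Set K, G.Countable ∧ G ⊆ {B : K | r B A} ∧
      {x : ℕ → α | ∀ n, x n ∈ (A : Set α)} \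
        (⋃ (B : K) (_ : r B A), {x : ℕ → α | ∀ n, x n ∈ (B : Set α)}) =
      {x : ℕ → α | ∀ n, x n ∈ (A : Set α)} \
        (⋃ B ∈ G, {x : ℕ → α | ∀ n, x n ∈ (B : Set α)}) := by
  obtain ⟨hAc, hAi⟩ := hmem A A.2
  set T : Set (Set α) := {Z | ∃ B : K, r B A ∧ Z = (A : Set α) ∩ (B : Set α)} with hT
  have hTc : T.Countable := by
    refine (hKurepa A hAc).mono ?_
    rintro Z ⟨B, _, rfl⟩
    exact ⟨B, B.2, rfl⟩
  have hsel : ∀ Z : T, ∃ B : K, r B A ∧ (Z : Set α) = (A : Set α) ∩ (B : Set α) :=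
    fun Z => Z.2
  choose f hf1 hf2 using hsel
  haveI : Countable T := hTc.to_subtype
  refine ⟨Set.range f, Set.countable_range f, ?_, ?_⟩
  · rintro B ⟨Z, rfl⟩; exact hf1 Z
  · ext x
    simp only [Set.mem_diff, Set.mem_setOf_eq, Set.mem_iUnion, not_exists]
    constructor
    · rintro ⟨hxA, hx⟩
      refine ⟨hxA, fun B hB hxB => ?_⟩
      obtain ⟨Z, rfl⟩ := hB
      exact hx (f Z) (hf1 Z) hxB
    · rintro ⟨hxA, hx⟩
      refine ⟨hxA, fun B hrB hxB => ?_⟩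
      have hZmem : (A : Set α) ∩ (B : Set α) ∈ T := ⟨B, hrB, rfl⟩
      have hx' : ∀ n, x n ∈ (f ⟨_, hZmem⟩ : Set α) := by
        intro n
        have : x n ∈ (A : Set α) ∩ (B : Set α) := ⟨hxA n, hxB n⟩
        have h2 := hf2 ⟨_, hZmem⟩
        rw [show ((⟨_, hZmem⟩ : T) : Set α) = (A : Set α) ∩ (B : Set α) from rfl] at h2
        exact (h2 ▸ this).2
      exact hx (f ⟨_, hZmem⟩) ⟨⟨_, hZmem⟩, rfl⟩ hx'
end

section
/- If κ is an infinite cardinal and there is a partition of ℝ into κ Borel sets, then there is a continuous bijection from the space κ^ω (the countable power of the discrete space of size κ) onto ℝ. -/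
/-!
A continuous bijection `g : (ℕ → ℕ) → ℝ` comes from a Lusin scheme of half-open intervals; pulling
the partition back along `g` gives a Borel partition `(B i)` of Baire space. For a nonempty Polish
space `Y`, a Lusin scheme of sets `A ×ˢ cylinder u n` with `A` locally closed yields a continuous
bijection `(ℕ → ℕ) → Y × (ℕ → ℕ)`: the second factor guarantees that every node has infinitely
many nonempty children. Refining the topology so that `B i` is closed, each `B i ×ˢ univ` is a
continuous injective image of Baire space, and since `(ℕ → ℕ) × (ℕ → ℕ) ≃ₜ (ℕ → ℕ)` this gives a
continuous bijection `α × (ℕ → ℕ) → (ℕ → ℕ)`. Taking countable powers,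
`(ℕ → α) ≃ₜ (ℕ → α × (ℕ → ℕ)) → (ℕ → ℕ → ℕ) ≃ₜ (ℕ → ℕ)`, where the first homeomorphism uses
`α × ℕ ≃ α`.
-/

open Set Filter Topology Function PiNat

namespace CantorScheme

variable {β α : Type*} {A : List β → Set α}

theorem exists_forall_mem_res (hcover : ∀ l, A l ⊆ ⋃ b, A (b :: l)) {y : α} (hy : y ∈ A []) :
    ∃ x : ℕ → β, ∀ n, y ∈ A (res x n) := by
  choose next hnext using fun l : {l // y ∈ A l} => mem_iUnion.1 (hcover l.1 l.2)
  let L : ℕ → {l // y ∈ A l} := fun n => Nat.rec ⟨[], hy⟩ (fun _ l => ⟨next l :: l.1, hnext l⟩) n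
  refine ⟨fun n => next (L n), fun n => ?_⟩
  have hres : res (fun n => next (L n)) n = (L n).1 := by
    induction n with
    | zero => rfl
    | succ n ih => rw [res_succ, ih]
  exact hres ▸ (L n).2

theorem vanishingDiam_of_dist_le [PseudoMetricSpace α] {ε : ℕ → ℝ}
    (hε : Tendsto ε atTop (𝓝 0))
    (hdiam : ∀ l b, ∀ x ∈ A (b :: l), ∀ y ∈ A (b :: l), dist x y ≤ ε l.length) :
    VanishingDiam A := by
  intro x
  rw [← tendsto_add_atTop_iff_nat 1]
  have hlim : Tendsto (fun n => ENNReal.ofReal (ε n)) atTop (𝓝 0) := by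
    simpa using ENNReal.tendsto_ofReal hε
  refine tendsto_of_tendsto_of_tendsto_of_le_of_le tendsto_const_nhds hlim (fun _ => zero_le)
    fun n => Metric.ediam_le_of_forall_dist_le ?_
  simpa only [res_succ, res_length] using hdiam (res x n) (x n)

variable [TopologicalSpace β] [DiscreteTopology β] [MetricSpace α] [CompleteSpace α]

theorem exists_continuous_injective_range_eq (hdisj : CantorScheme.Disjoint A)
    (hanti : ClosureAntitone A) (hdiam : VanishingDiam A) (hne : ∀ l, (A l).Nonempty)
    (hcover : ∀ l, A l ⊆ ⋃ b, A (b :: l)) :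
    ∃ f : (ℕ → β) → α, Continuous f ∧ Injective f ∧ range f = A [] := by
  have hdom := hanti.map_of_vanishingDiam hdiam hne
  let f : (ℕ → β) → α := fun x => (inducedMap A).2 ⟨x, hdom ▸ mem_univ x⟩
  have hf : ∀ x n, f x ∈ A (res x n) := fun x => map_mem _
  refine ⟨f, hdiam.map_continuous.comp (continuous_id.subtype_mk _),
    fun x y h => congrArg Subtype.val (hdisj.map_injective h), ?_⟩
  refine Subset.antisymm (range_subset_iff.2 fun x => hf x 0) fun y hy => ?_
  obtain ⟨x, hx⟩ := exists_forall_mem_res hcover hy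
  refine ⟨x, eq_of_forall_dist_le fun ε hε => ?_⟩
  obtain ⟨n, hn⟩ := hdiam.dist_lt ε hε x
  exact (hn _ (hf x n) _ (hx n)).le

end CantorScheme

theorem exists_continuous_injective_range_eq_of_forall_split {X : Type*} [MetricSpace X]
    [CompleteSpace X] (C : ℕ → Set X → Prop) {ε : ℕ → ℝ} (hε : Tendsto ε atTop (𝓝 0))
    (hne : ∀ n S, C n S → S.Nonempty)
    (hsplit : ∀ n S, C n S → ∃ a : ℕ → Set X, (∀ k, C (n + 1) (a k)) ∧
      Pairwise (Disjoint on a) ∧ ⋃ k, a k = S ∧ (∀ k, closure (a k) ⊆ S) ∧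
      ∀ k, ∀ x ∈ a k, ∀ y ∈ a k, dist x y ≤ ε n)
    {S : Set X} (hS : C 0 S) :
    ∃ f : (ℕ → ℕ) → X, Continuous f ∧ Injective f ∧ range f = S := by
  choose a haC hdisj hcover hclosure hdiam using hsplit
  let A : (l : List ℕ) → {T // C l.length T} :=
    fun l => l.rec ⟨S, hS⟩ fun k _ T => ⟨a _ _ T.2 k, haC _ _ T.2 k⟩
  exact CantorScheme.exists_continuous_injective_range_eq (A := fun l => (A l).1)
    (fun l => hdisj _ _ (A l).2) (fun l => hclosure _ _ (A l).2)
    (CantorScheme.vanishingDiam_of_dist_le hε fun l => hdiam _ _ (A l).2)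
    (fun l => hne _ _ (A l).2) (fun l => (hcover _ _ (A l).2).symm.subset)

theorem Antitone.iUnion_Ioc_succ {α : Type*} [LinearOrder α] [TopologicalSpace α]
    [OrderTopology α] {c : ℕ → α} {a : α} (hc : Antitone c)
    (hlim : Tendsto c atTop (𝓝 a)) :
    ⋃ k, Ioc (c (k + 1)) (c k) = Ioc a (c 0) := by
  ext x
  simp only [mem_iUnion, mem_Ioc]
  constructor
  · rintro ⟨k, hkx, hxk⟩
    exact ⟨(hc.le_of_tendsto hlim _).trans_lt hkx, hxk.trans (hc k.zero_le)⟩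
  · rintro ⟨hax, hx0⟩
    classical
    have hex : ∃ k, c k < x := (hlim.eventually (gt_mem_nhds hax)).exists
    obtain ⟨k, hk⟩ : ∃ k, Nat.find hex = k + 1 :=
      Nat.exists_eq_add_one.2 (Nat.pos_of_ne_zero fun h => (Nat.find_spec hex).not_ge (h ▸ hx0))
    exact ⟨k, hk ▸ Nat.find_spec hex, not_lt.1 (Nat.find_min hex (hk ▸ k.lt_succ_self))⟩

theorem exists_strictAnti_tendsto_of_lt {a b : ℝ} (hab : a < b) :
    ∃ c : ℕ → ℝ, StrictAnti c ∧ c 0 = b ∧ Tendsto c atTop (𝓝 a) ∧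
      ∀ k, c k - c (k + 1) ≤ (b - a) / 2 := by
  have hhalf := tendsto_pow_atTop_nhds_zero_of_lt_one (by norm_num : (0 : ℝ) ≤ 2⁻¹) (by norm_num)
  refine ⟨fun k => a + (b - a) * 2⁻¹ ^ k, fun k l hkl => ?_, by simp,
    by simpa using (hhalf.const_mul (b - a)).const_add a, fun k => ?_⟩
  · have : (2 : ℝ)⁻¹ ^ l < 2⁻¹ ^ k := pow_lt_pow_right_of_lt_one₀ (by norm_num) (by norm_num) hkl
    exact add_lt_add_right (mul_lt_mul_of_pos_left this (sub_pos.2 hab)) a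
  · have : (2 : ℝ)⁻¹ ^ k ≤ 1 := pow_le_one₀ (by norm_num) (by norm_num)
    simp only [pow_succ]
    nlinarith

theorem exists_continuous_bijective_nat_nat_real :
    ∃ f : (ℕ → ℕ) → ℝ, Continuous f ∧ Bijective f := by
  refine (exists_continuous_injective_range_eq_of_forall_split
    (fun n S => (n = 0 ∧ S = univ) ∨ ∃ a b : ℝ, a < b ∧ b - a ≤ 2 * 2⁻¹ ^ n ∧ S = Ioc a b)
    (tendsto_pow_atTop_nhds_zero_of_lt_one (by norm_num : (0 : ℝ) ≤ 2⁻¹) (by norm_num))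
    (by
      rintro n S (⟨-, rfl⟩ | ⟨a, b, hab, -, rfl⟩)
      exacts [univ_nonempty, nonempty_Ioc.2 hab])
    ?_ (Or.inl ⟨rfl, rfl⟩)).imp fun f ⟨hfc, hfi, hfr⟩ => ⟨hfc, hfi, range_eq_univ.1 hfr⟩
  rintro n S (⟨rfl, rfl⟩ | ⟨a, b, hab, hba, rfl⟩)
  · let m : ℕ ≃ ℤ := Equiv.intEquivNat.symm
    refine ⟨fun k => Ioc (m k : ℝ) (m k + 1),
      fun k => Or.inr ⟨_, _, lt_add_one _, by norm_num, rfl⟩,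
      (pairwise_disjoint_Ioc_intCast ℝ).comp_of_injective m.injective,
      m.surjective.iUnion_comp (fun j : ℤ => Ioc (j : ℝ) (j + 1)) ▸ iUnion_Ioc_intCast ℝ,
      fun _ => subset_univ _, fun k x hx y hy => ?_⟩
    simpa using Real.dist_le_of_mem_Icc (Ioc_subset_Icc_self hx) (Ioc_subset_Icc_self hy)
  · obtain ⟨c, hc, rfl, hlim, hgap⟩ := exists_strictAnti_tendsto_of_lt hab
    have hgap' : ∀ k, c k - c (k + 1) ≤ 2⁻¹ ^ n := fun k => by linarith [hgap k]
    refine ⟨fun k => Ioc (c (k + 1)) (c k),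
      fun k => Or.inr ⟨_, _, hc k.lt_succ_self, (hgap' k).trans_eq (by ring), rfl⟩,
      by simpa using hc.antitone.pairwise_disjoint_on_Ioc_succ, hc.antitone.iUnion_Ioc_succ hlim,
      fun k => ?_, fun k x hx y hy => ?_⟩
    · rw [closure_Ioc (hc k.lt_succ_self).ne]
      exact Icc_subset_Ioc ((hc.antitone.le_of_tendsto hlim _).trans_lt (hc (k + 1).lt_succ_self))
        (hc.antitone k.zero_le)
    · exact (Real.dist_le_of_mem_Icc (Ioc_subset_Icc_self hx) (Ioc_subset_Icc_self hy)).trans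
        (hgap' k)

theorem isLocallyClosed_disjointed {X : Type*} [TopologicalSpace X] {f : ℕ → Set X}
    (hf : ∀ n, IsClosed (f n)) (n : ℕ) : IsLocallyClosed (disjointed f n) := by
  rw [disjointed_eq_inter_compl]
  exact (hf n).isLocallyClosed.inter
    ((finite_lt_nat n).isOpen_biInter fun j _ => (hf j).isOpen_compl).isLocallyClosed

theorem PiNat.isClosed_cylinder {E : ℕ → Type*} [∀ n, TopologicalSpace (E n)]
    [∀ n, DiscreteTopology (E n)] (x : ∀ n, E n) (n : ℕ) : IsClosed (cylinder x n) := by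
  rw [cylinder_eq_pi]
  exact isClosed_set_pi fun _ _ => isClosed_discrete _

theorem PiNat.disjoint_cylinder_update {E : ℕ → Type*} (x : ∀ n, E n) (n : ℕ) {a b : E n}
    (hab : a ≠ b) : Disjoint (cylinder (update x n a) (n + 1)) (cylinder (update x n b) (n + 1)) :=
  Set.disjoint_left.2 fun y hya hyb => hab <| by
    simpa using (hya n n.lt_succ_self).symm.trans (hyb n n.lt_succ_self)

section Split

variable {X : Type*} [MetricSpace X] [TopologicalSpace.SeparableSpace X]

theorem IsLocallyClosed.exists_split [Nonempty X] {A : Set X} (hA : IsLocallyClosed A)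
    {ε : ℝ} (hε : 0 < ε) :
    ∃ a : ℕ → Set X, (∀ k, IsLocallyClosed (a k)) ∧ Pairwise (Disjoint on a) ∧ ⋃ k, a k = A ∧
      (∀ k, closure (a k) ⊆ A) ∧ ∀ k, ∀ x ∈ a k, ∀ y ∈ a k, dist x y ≤ ε := by
  obtain ⟨U, Z, hU, hZ, rfl⟩ := hA
  obtain ⟨K, hKc, hKU, hKun, -⟩ := hU.exists_iUnion_isClosed
  obtain ⟨u, hu⟩ := TopologicalSpace.exists_dense_seq X
  let D : ℕ → Set X := fun m => Metric.closedBall (u m) (ε / 2)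
  have hDun : ⋃ m, D m = univ := eq_univ_of_forall fun x => by
    obtain ⟨m, hm⟩ := hu.exists_dist_lt x (half_pos hε)
    exact mem_iUnion.2 ⟨m, Metric.mem_closedBall.2 hm.le⟩
  let e : ℕ ≃ ℕ × ℕ := Nat.pairEquiv.symm
  let p : ℕ × ℕ → Set X := fun nm => Z ∩ disjointed K nm.1 ∩ disjointed D nm.2
  refine ⟨fun k => p (e k), fun k => ?_, fun k l hkl => ?_, ?_, fun k => ?_, fun k x hx y hy => ?_⟩
  · exact (hZ.isLocallyClosed.inter (isLocallyClosed_disjointed hKc _)).inter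
      (isLocallyClosed_disjointed (fun _ => Metric.isClosed_closedBall) _)
  · have hne : e k ≠ e l := e.injective.ne hkl
    by_cases h : (e k).1 = (e l).1
    · exact (disjoint_disjointed D fun h' => hne (Prod.ext h h')).mono inter_subset_right
        inter_subset_right
    · exact (disjoint_disjointed K h).mono (inter_subset_left.trans inter_subset_right)
        (inter_subset_left.trans inter_subset_right)
  · calc ⋃ k, p (e k) = Z ∩ ⋃ nm : ℕ × ℕ, disjointed K nm.1 ∩ disjointed D nm.2 := by
          rw [e.surjective.iUnion_comp p]
          simp only [p, inter_assoc, inter_iUnion]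
      _ = Z ∩ (⋃ n, K n) ∩ ⋃ m, D m := by
          rw [iUnion_prod', ← iUnion_inter_iUnion, iUnion_disjointed, iUnion_disjointed,
            inter_assoc]
      _ = U ∩ Z := by rw [hKun, hDun, inter_univ, inter_comm]
  · have hsub : p (e k) ⊆ Z ∩ K (e k).1 := fun x hx => ⟨hx.1.1, disjointed_subset K _ hx.1.2⟩
    exact (closure_minimal hsub (hZ.inter (hKc _))).trans fun x hx => ⟨hKU _ hx.2, hx.1⟩
  · have hx : x ∈ D (e k).2 := disjointed_subset D _ hx.2
    have hy : y ∈ D (e k).2 := disjointed_subset D _ hy.2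
    linarith [dist_triangle_right x y (u (e k).2), Metric.mem_closedBall.1 hx,
      Metric.mem_closedBall.1 hy]

theorem IsLocallyClosed.exists_split_prod_cylinder {A : Set X} (hA : IsLocallyClosed A)
    (hne : A.Nonempty) {ε : ℝ} (hε : 0 < ε) (u : ℕ → ℕ) (n : ℕ) :
    ∃ (B : ℕ → Set X) (v : ℕ → ℕ → ℕ),
      (∀ k, IsLocallyClosed (B k) ∧ (B k).Nonempty ∧ ∀ x ∈ B k, ∀ y ∈ B k, dist x y ≤ ε) ∧
      Pairwise (Disjoint on fun k => B k ×ˢ cylinder (v k) (n + 1)) ∧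
      ⋃ k, B k ×ˢ cylinder (v k) (n + 1) = A ×ˢ cylinder u n ∧
      ∀ k, closure (B k ×ˢ cylinder (v k) (n + 1)) ⊆ A ×ˢ cylinder u n := by
  have : Nonempty X := hne.to_subtype.map Subtype.val
  obtain ⟨a, hlc, hdisj, hun, hcl, hdiam⟩ := hA.exists_split hε
  let J := {j | (a j).Nonempty}
  have hJ : ⋃ j : J, a j = A := by
    refine (iUnion_subset fun j : J => (subset_iUnion a j).trans hun.subset :
      ⋃ j : J, a j ⊆ A).antisymm fun x hx => ?_
    obtain ⟨j, hj⟩ := mem_iUnion.1 (hun.superset hx)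
    exact mem_iUnion.2 ⟨⟨j, x, hj⟩, hj⟩
  have : Nonempty J := by
    obtain ⟨j, -⟩ := mem_iUnion.1 (hJ.superset hne.some_mem)
    exact ⟨j⟩
  have : Denumerable (J × ℕ) := (nonempty_denumerable _).some
  let e : ℕ ≃ J × ℕ := (Denumerable.eqv _).symm
  have hcyl : ∀ k, cylinder (update u n k) (n + 1) ⊆ cylinder u n := fun k =>
    iUnion_cylinder_update u n ▸ subset_iUnion (fun k => cylinder (update u n k) (n + 1)) k
  refine ⟨fun k => a (e k).1, fun k => update u n (e k).2,
    fun k => ⟨hlc _, (e k).1.2, hdiam _⟩, fun k l hkl => ?_, ?_, fun k => ?_⟩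
  · rw [Function.onFun, Set.disjoint_prod]
    by_cases h : (e k).1 = (e l).1
    · exact Or.inr (disjoint_cylinder_update u n fun h' => e.injective.ne hkl (Prod.ext h h'))
    · exact Or.inl (hdisj (Subtype.val_injective.ne h))
  · rw [e.surjective.iUnion_comp (fun p => a p.1 ×ˢ cylinder (update u n p.2) (n + 1)),
      iUnion_prod (fun j : J => a j) (fun k => cylinder (update u n k) (n + 1)), hJ]
    exact congrArg (A ×ˢ ·) (iUnion_cylinder_update u n)
  · rw [closure_prod_eq]
    exact prod_mono (hcl _) (closure_minimal (hcyl _) (isClosed_cylinder u n))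

end Split

theorem PolishSpace.exists_continuous_bijective_nat_nat_prod (Y : Type*) [TopologicalSpace Y]
    [PolishSpace Y] [Nonempty Y] :
    ∃ f : (ℕ → ℕ) → Y × (ℕ → ℕ), Continuous f ∧ Bijective f := by
  -- both metrics are compatible with the given topologies (definitionally)
  let := TopologicalSpace.upgradeIsCompletelyMetrizable Y
  let := PiNat.metricSpaceNatNat
  refine (exists_continuous_injective_range_eq_of_forall_split
    (fun n S => ∃ (A : Set Y) (u : ℕ → ℕ), IsLocallyClosed A ∧ A.Nonempty ∧ S = A ×ˢ cylinder u n)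
    (tendsto_pow_atTop_nhds_zero_of_lt_one (by norm_num : (0 : ℝ) ≤ 1 / 2) (by norm_num))
    (fun n S ⟨A, u, _, hA, hS⟩ => hS ▸ hA.prod ⟨u, self_mem_cylinder u n⟩) ?_
    ⟨univ, id, isClosed_univ.isLocallyClosed, univ_nonempty, by rw [cylinder_zero, univ_prod_univ]⟩
    ).imp fun f ⟨hfc, hfi, hfr⟩ => ⟨hfc, hfi, range_eq_univ.1 hfr⟩
  rintro n S ⟨A, u, hA, hne, rfl⟩
  obtain ⟨B, v, hB, hdisj, hun, hcl⟩ :=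
    hA.exists_split_prod_cylinder hne (ε := (1 / 2) ^ n) (by positivity) u n
  refine ⟨fun k => B k ×ˢ cylinder (v k) (n + 1), fun k => ⟨B k, v k, (hB k).1, (hB k).2.1, rfl⟩,
    hdisj, hun, hcl, ?_⟩
  rintro k ⟨x, z⟩ ⟨hx, hz⟩ ⟨x', z'⟩ ⟨hx', hz'⟩
  have hzz' : dist z z' ≤ (1 / 2) ^ (n + 1) :=
    (dist_triangle_nonarch z (v k) z').trans (max_le (mem_cylinder_iff_dist_le.1 hz)
      (dist_comm z' (v k) ▸ mem_cylinder_iff_dist_le.1 hz'))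
  rw [Prod.dist_eq]
  exact max_le ((hB k).2.2 x hx x' hx') (hzz'.trans (pow_le_pow_of_le_one (by norm_num)
    (by norm_num) n.le_succ))

theorem IsClosed.exists_continuous_injective_range_eq_prod {X : Type*} [TopologicalSpace X]
    [PolishSpace X] {B : Set X} (hB : IsClosed B) (hne : B.Nonempty) :
    ∃ f : (ℕ → ℕ) → X × (ℕ → ℕ), Continuous f ∧ Injective f ∧ range f = B ×ˢ univ := by
  have := hB.polishSpace
  have := hne.to_subtype
  obtain ⟨K, hKc, hKb⟩ := PolishSpace.exists_continuous_bijective_nat_nat_prod B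
  refine ⟨Prod.map Subtype.val id ∘ K, (continuous_subtype_val.prodMap continuous_id).comp hKc,
    (Subtype.val_injective.prodMap injective_id).comp hKb.1, ?_⟩
  rw [range_comp, hKb.2.range_eq, image_univ, range_prodMap, Subtype.range_coe, range_id]

theorem MeasurableSet.exists_continuous_injective_range_eq_prod {X : Type*} [TopologicalSpace X]
    [PolishSpace X] [MeasurableSpace X] [BorelSpace X] {B : Set X} (hB : MeasurableSet B)
    (hne : B.Nonempty) :
    ∃ f : (ℕ → ℕ) → X × (ℕ → ℕ), Continuous f ∧ Injective f ∧ range f = B ×ˢ univ := by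
  obtain ⟨t, ht, htp, hBc, -⟩ := hB.isClopenable
  obtain ⟨f, hfc, hfi, hfr⟩ :=
    @IsClosed.exists_continuous_injective_range_eq_prod X t htp B hBc hne
  exact ⟨f, continuous_le_rng (inf_le_inf_right _ (induced_mono ht)) hfc, hfi, hfr⟩

theorem Function.bijective_uncurry_of_partition {ι Y Z : Type*} {f : ι → Y → Z}
    (hinj : ∀ i, Injective (f i)) (hdisj : Pairwise (Disjoint on fun i => range (f i)))
    (hcover : ⋃ i, range (f i) = univ) : Bijective (uncurry f) := by
  refine ⟨fun ⟨i, y⟩ ⟨j, y'⟩ h => ?_, fun z => ?_⟩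
  · obtain rfl : i = j := by
      by_contra hij
      exact (hdisj hij).ne_of_mem (mem_range_self y) (mem_range_self y') h
    exact congrArg _ (hinj i h)
  · obtain ⟨i, y, rfl⟩ := mem_iUnion.1 (hcover.superset (mem_univ z))
    exact ⟨(i, y), rfl⟩

theorem exists_continuous_bijective_prod_of_partition {ι X : Type*} [TopologicalSpace ι]
    [DiscreteTopology ι] [TopologicalSpace X] [PolishSpace X] [MeasurableSpace X] [BorelSpace X]
    {B : ι → Set X} (hdisj : Pairwise (Disjoint on B)) (hne : ∀ i, (B i).Nonempty)
    (hB : ∀ i, MeasurableSet (B i)) (hcover : ⋃ i, B i = univ) :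
    ∃ F : ι × (ℕ → ℕ) → X × (ℕ → ℕ), Continuous F ∧ Bijective F := by
  choose f hfc hfi hfr using fun i => (hB i).exists_continuous_injective_range_eq_prod (hne i)
  refine ⟨uncurry f, continuous_prod_of_discrete_left.2 hfc,
    bijective_uncurry_of_partition hfi (fun i j hij => ?_) ?_⟩
  · rw [Function.onFun, hfr, hfr]
    exact disjoint_prod.2 (Or.inl (hdisj hij))
  · simp only [hfr, ← iUnion_prod_const, hcover, univ_prod_univ]

def Homeomorph.arrowProdEquivProdArrow (ι X Y : Type*) [TopologicalSpace X] [TopologicalSpace Y] :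
    (ι → X × Y) ≃ₜ (ι → X) × (ι → Y) where
  toEquiv := Equiv.arrowProdEquivProdArrow ι (fun _ => X) (fun _ => Y)
  continuous_toFun := by dsimp [Equiv.arrowProdEquivProdArrow]; fun_prop
  continuous_invFun := by dsimp [Equiv.arrowProdEquivProdArrow]; fun_prop

def Homeomorph.piNatPiNat (X : Type*) [TopologicalSpace X] : (ℕ → ℕ → X) ≃ₜ (ℕ → X) where
  toFun x k := x (Nat.unpair k).1 (Nat.unpair k).2
  invFun y m n := y (Nat.pair m n)
  left_inv x := by simp
  right_inv y := by simp
  continuous_toFun := by fun_prop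
  continuous_invFun := by fun_prop

def Homeomorph.prodPiNat (X : Type*) [TopologicalSpace X] : (ℕ → X) × (ℕ → X) ≃ₜ (ℕ → X) :=
  Homeomorph.sumArrowHomeomorphProdArrow.symm.trans
    (Homeomorph.piCongrLeft (Y := fun _ => X) Equiv.natSumNatEquivNat)

open Cardinal in
theorem nonempty_homeomorph_piNat_prod {ι : Type*} [TopologicalSpace ι] [DiscreteTopology ι]
    (hι : ℵ₀ ≤ #ι) : Nonempty ((ℕ → ι) ≃ₜ (ℕ → ι × (ℕ → ℕ))) := by
  obtain ⟨e⟩ : Nonempty (ι × ℕ ≃ ι) := by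
    rw [← Cardinal.eq, mk_prod, mk_nat, lift_aleph0, lift_uzero, mul_aleph0_eq hι]
  exact ⟨((Homeomorph.arrowProdEquivProdArrow ℕ ι (ℕ → ℕ)).trans
    (((Homeomorph.refl _).prodCongr (Homeomorph.piNatPiNat ℕ)).trans
      ((Homeomorph.arrowProdEquivProdArrow ℕ ι ℕ).symm.trans
        (Homeomorph.piCongrRight fun _ => e.toHomeomorphOfDiscrete)))).symm⟩

open Cardinal in
theorem exists_continuous_bijective_piNat_of_prod {ι : Type*} [TopologicalSpace ι]
    [DiscreteTopology ι] (hι : ℵ₀ ≤ #ι) {F : ι × (ℕ → ℕ) → (ℕ → ℕ)} (hFc : Continuous F)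
    (hFb : Bijective F) : ∃ G : (ℕ → ι) → (ℕ → ℕ), Continuous G ∧ Bijective G := by
  obtain ⟨H⟩ := nonempty_homeomorph_piNat_prod hι
  exact ⟨Homeomorph.piNatPiNat ℕ ∘ (F ∘ ·) ∘ H,
    (Homeomorph.continuous _).comp
      ((continuous_pi fun n => hFc.comp (continuous_apply n)).comp H.continuous),
    (Homeomorph.bijective _).comp (hFb.comp_left.comp H.bijective)⟩

open Cardinal Set

universe u

/-- If ℝ can be partitioned into κ Borel sets (κ infinite), then there is a
continuous bijection from κ^ω (the countable power of the discrete space of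
size κ) onto ℝ. Here the discrete space of size κ is a discrete space α. -/
theorem stmt_12 {α : Type u} [TopologicalSpace α] [DiscreteTopology α]
    (hα : ℵ₀ ≤ #α)
    (P : Set (Set ℝ))
    (hdisj : ∀ p ∈ P, ∀ q ∈ P, p ≠ q → Disjoint p q)
    (hne : ∀ p ∈ P, p.Nonempty)
    (hBorel : ∀ p ∈ P, MeasurableSet p)
    (hcover : ⋃₀ P = Set.univ)
    (hcard : Cardinal.lift.{u} #P = Cardinal.lift.{0} #α) :
    ∃ f : (ℕ → α) → ℝ, Continuous f ∧ Function.Bijective f := by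
  let e : α ≃ P := (lift_mk_eq'.1 hcard).some.symm
  obtain ⟨g, hgc, hgb⟩ := exists_continuous_bijective_nat_nat_real
  obtain ⟨F, hFc, hFb⟩ := exists_continuous_bijective_prod_of_partition (B := fun i => g ⁻¹' e i)
    (fun i j hij => (hdisj _ (e i).2 _ (e j).2
      (Subtype.val_injective.ne (e.injective.ne hij))).preimage g)
    (fun i => (hne _ (e i).2).preimage hgb.2) (fun i => hgc.measurable (hBorel _ (e i).2))
    (by rw [← preimage_iUnion, e.surjective.iUnion_comp (fun p : P => (p : Set ℝ)),
      ← sUnion_eq_iUnion, hcover, preimage_univ])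
  obtain ⟨G, hGc, hGb⟩ := exists_continuous_bijective_piNat_of_prod hα
    ((Homeomorph.prodPiNat ℕ).continuous.comp hFc) ((Homeomorph.prodPiNat ℕ).bijective.comp hFb)
  exact ⟨g ∘ G, hgc.comp hGc, hgb.comp hGb⟩
end

section
/- Let κ be an uncountable cardinal with a cofinal Kurepa family K in [κ]^ω, and well-order K by ≺. For A ∈ K set Y_A = A^ω \ ⋃{B^ω : B ≺ A} as subspaces of the product space κ^ω (κ discrete). Then each nonempty Y_A is a Polish space (second countable and G_δ in κ^ω), and the nonempty Y_A's partition κ^ω into exactly |K| Polish subspaces. Consequently par(κ^ω) ≤ cf[κ]^ω. -/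
open Cardinal Set

/-!
Every `x : ℕ → α` has countable range, so by cofinality it lies in `A^ω` for some `A ∈ K`, and
then in `Y_A` for the `≺`-least such `A`; the `Y_A` are disjoint by trichotomy. Inside the Polish
space `A^ω` (`A` countable), `Y_A` is the complement of the closed sets `(A ∩ B)^ω`, `B ≺ A`, of
which there are only countably many by the Kurepa property; so `Y_A` is a `G_δ` in `A^ω`, hence
Polish. Sending `A` to the piece containing an enumeration of `A` is countable-to-one, again by
the Kurepa property, so there are `|K|` nonempty pieces. Finally, every cofinal family `F` yields
a cofinal subfamily of `K` of size at most `|F|`; it is still Kurepa, so its pieces partition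
`α^ω` into at most `|F|` Polish sets.
-/

open Topology Set.Notation

universe u

theorem mk_le_mk_of_countable_preimage {β γ : Type u} (f : β → γ)
    (hf : ∀ c, (f ⁻¹' {c}).Countable) (hβ : ℵ₀ < #β) : #β ≤ #γ := by
  have := mk_le_mk_mul_of_mk_preimage_le f fun c => le_aleph0_iff_set_countable.2 (hf c)
  by_contra! h
  exact (mul_lt_of_lt hβ.le h hβ).not_ge this

theorem IsGδ.polishSpace {X : Type*} [TopologicalSpace X] [PolishSpace X] {s : Set X}
    (hs : IsGδ s) : PolishSpace s := by
  obtain ⟨U, hU, rfl⟩ := hs.eq_iInter_nat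
  have (n : ℕ) : PolishSpace (U n) := (hU n).polishSpace
  let diag : (⋂ n, U n : Set X) → ∀ n, U n := fun x n => ⟨x, mem_iInter.1 x.2 n⟩
  have hrange : range diag = {f | ∀ n, (f n : X) = f 0} := by
    refine Subset.antisymm (range_subset_iff.2 fun x n => rfl) fun f hf => ?_
    exact ⟨⟨f 0, mem_iInter.2 fun n => hf n ▸ (f n).2⟩,
      funext fun n => Subtype.ext (hf n).symm⟩
  refine IsClosedEmbedding.polishSpace (f := diag) ⟨⟨?_, ?_⟩, ?_⟩
  · exact IsInducing.of_comp (g := fun f : ∀ n, U n => (f 0 : X)) (by fun_prop) (by fun_prop)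
      IsInducing.subtypeVal
  · exact fun x y h => Subtype.ext (congrArg (fun f => (f 0 : X)) h)
  · rw [hrange, ofPred_forall]
    exact isClosed_iInter fun n => isClosed_eq (by fun_prop) (by fun_prop)

theorem PolishSpace.of_isGδ_preimage_val {X : Type*} [TopologicalSpace X] {s t : Set X}
    [PolishSpace t] (hst : s ⊆ t) (hs : IsGδ (t ↓∩ s)) : PolishSpace s := by
  have := hs.polishSpace
  have e : (t ↓∩ s) ≃ₜ s :=
    IsEmbedding.subtypeVal.homeomorphOfSubsetRange (by rwa [Subtype.range_coe])
  exact e.symm.isClosedEmbedding.polishSpace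

section Cube

variable {α : Type*}

def cube (A : Set α) : Set (ℕ → α) := {x | ∀ n, x n ∈ A}

theorem cube_eq_pi (A : Set α) : cube A = pi univ fun _ => A := by
  ext; simp [cube]

theorem cube_inter (A B : Set α) : cube (A ∩ B) = cube A ∩ cube B := by
  ext; simp [cube, forall_and]

variable [TopologicalSpace α] [DiscreteTopology α]

theorem isClosed_cube (A : Set α) : IsClosed (cube A) :=
  cube_eq_pi A ▸ isClosed_set_pi fun _ _ => isClosed_discrete A

def cubeHomeomorph (A : Set α) : cube A ≃ₜ (ℕ → A) where
  toFun x n := ⟨x.1 n, x.2 n⟩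
  invFun f := ⟨fun n => f n, fun n => (f n).2⟩
  continuous_toFun :=
    continuous_pi fun n => ((continuous_apply n).comp continuous_subtype_val).subtype_mk _
  continuous_invFun := by fun_prop

theorem polishSpace_cube {A : Set α} (hA : A.Countable) : PolishSpace (cube A) :=
  have : Countable A := hA.to_subtype
  have : PolishSpace A := inferInstance
  (cubeHomeomorph A).isClosedEmbedding.polishSpace

theorem polishSpace_cube_diff_iUnion {A : Set α} (hA : A.Countable) {ι : Type*}
    (B : ι → Set α) (hB : (range fun i => A ∩ B i).Countable) :
    PolishSpace ↥(cube A \ ⋃ i, cube (B i)) := by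
  have := polishSpace_cube hA
  refine PolishSpace.of_isGδ_preimage_val sdiff_subset ?_
  have : cube A ↓∩ (cube A \ ⋃ i, cube (B i)) =
      ⋂ Z ∈ range fun i => A ∩ B i, (cube A ↓∩ cube Z)ᶜ := by
    ext x
    simp [cube_inter]
  rw [this]
  exact .biInter_of_isOpen hB fun Z _ =>
    ((isClosed_cube Z).preimage continuous_subtype_val).isOpen_compl

end Cube

section Kurepa

variable {α : Type*}

def IsCofinalInCountable (K : Set (Set α)) : Prop :=
  ∀ X : Set α, X.Countable → X.Infinite → ∃ A ∈ K, X ⊆ A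

def IsKurepa (K : Set (Set α)) : Prop :=
  ∀ X : Set α, X.Countable → {Z : Set α | ∃ A ∈ K, Z = X ∩ A}.Countable

theorem IsCofinalInCountable.exists_superset [Infinite α] {K : Set (Set α)}
    (hK : IsCofinalInCountable K) {X : Set α} (hX : X.Countable) : ∃ A ∈ K, X ⊆ A := by
  obtain ⟨A, hA, hXA⟩ := hK (X ∪ range (Infinite.natEmbedding α))
    (hX.union (countable_range _))
    ((infinite_range_of_injective (Infinite.natEmbedding α).injective).mono subset_union_right)
  exact ⟨A, hA, subset_union_left.trans hXA⟩

theorem IsCofinalInCountable.aleph0_lt_mk {K : Set (Set α)} (hα : ℵ₀ < #α)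
    (hmem : ∀ A ∈ K, A.Countable) (hK : IsCofinalInCountable K) : ℵ₀ < #K := by
  have : Infinite α := Cardinal.infinite_iff.2 hα.le
  rw [← not_le, le_aleph0_iff_set_countable]
  intro hKc
  have hcover : ⋃₀ K = Set.univ := eq_univ_of_forall fun a =>
    let ⟨A, hA, haA⟩ := hK.exists_superset (countable_singleton a)
    ⟨A, hA, haA rfl⟩
  have : Countable α := countable_univ_iff.1 (hcover ▸ hKc.sUnion hmem)
  exact hα.not_ge mk_le_aleph0

theorem IsKurepa.mono {K K' : Set (Set α)} (hK : IsKurepa K) (h : K' ⊆ K) : IsKurepa K' :=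
  fun X hX => (hK X hX).mono <| by rintro _ ⟨A, hA, rfl⟩; exact ⟨A, h hA, rfl⟩

theorem IsKurepa.countable_setOf_subset {K : Set (Set α)} (hK : IsKurepa K) {C : Set α}
    (hC : C.Countable) : {A : K | (A : Set α) ⊆ C}.Countable := by
  refine MapsTo.countable_of_injOn (f := fun A : K => (A : Set α)) ?_
    Subtype.val_injective.injOn (hK C hC)
  exact fun A hAC => ⟨A, A.2, (inter_eq_self_of_subset_right hAC).symm⟩

theorem IsCofinalInCountable.exists_subset_mk_le {K F : Set (Set α)}
    (hK : IsCofinalInCountable K) (hF : IsCofinalInCountable F)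
    (hFmem : ∀ B ∈ F, B.Countable ∧ B.Infinite) :
    ∃ K' ⊆ K, IsCofinalInCountable K' ∧ #K' ≤ #F := by
  choose g hgK hg using fun B : F => hK B (hFmem B B.2).1 (hFmem B B.2).2
  refine ⟨range g, range_subset_iff.2 hgK, fun X hXc hXi => ?_, mk_range_le⟩
  obtain ⟨B, hB, hXB⟩ := hF X hXc hXi
  exact ⟨g ⟨B, hB⟩, mem_range_self _, hXB.trans (hg ⟨B, hB⟩)⟩

end Kurepa

section Pieces

variable {α : Type*} (K : Set (Set α)) (r : K → K → Prop)

def cubePiece (A : K) : Set (ℕ → α) := cube A \ ⋃ (B : K) (_ : r B A), cube B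

theorem polishSpace_cubePiece [TopologicalSpace α] [DiscreteTopology α] (hK : IsKurepa K)
    {A : K} (hA : (A : Set α).Countable) : PolishSpace (cubePiece K r A) := by
  rw [cubePiece, ← iUnion_subtype (fun B => r B A) fun B => cube (B : Set α)]
  refine polishSpace_cube_diff_iUnion hA _ <| (hK A hA).mono ?_
  rintro _ ⟨B, rfl⟩
  exact ⟨B, B.1.2, rfl⟩

theorem disjoint_cubePiece_of_rel {A B : K} (h : r A B) :
    Disjoint (cubePiece K r A) (cubePiece K r B) :=
  disjoint_left.2 fun _ hA hB => hB.2 <| mem_biUnion h hA.1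

open Function in
theorem pairwise_disjoint_cubePiece [Std.Trichotomous r] :
    Pairwise (Disjoint on (cubePiece K r)) := by
  intro A B hAB
  rcases trichotomous_of r A B with h | h | h
  · exact disjoint_cubePiece_of_rel K r h
  · exact absurd h hAB
  · exact (disjoint_cubePiece_of_rel K r h).symm

theorem exists_mem_cubePiece [IsWellFounded K r] {x : ℕ → α} {A : K} (hx : x ∈ cube A) :
    ∃ B, x ∈ cubePiece K r B := by
  obtain ⟨B, hB, hmin⟩ :=
    (IsWellFounded.wf (r := r)).has_min {B : K | x ∈ cube (B : Set α)} ⟨A, hx⟩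
  refine ⟨B, hB, fun hx' => ?_⟩
  obtain ⟨C, hCB, hxC⟩ := mem_iUnion₂.1 hx'
  exact hmin C hxC hCB

theorem iUnion_cubePiece [IsWellFounded K r] [Infinite α] (hK : IsCofinalInCountable K) :
    ⋃ A, cubePiece K r A = Set.univ := by
  refine eq_univ_of_forall fun x => mem_iUnion.2 ?_
  obtain ⟨A, hA, hxA⟩ := hK.exists_superset (countable_range x)
  exact exists_mem_cubePiece K r (A := ⟨A, hA⟩) fun n => hxA (mem_range_self n)

theorem mk_setOf_cubePiece_nonempty [IsWellFounded K r] (hα : ℵ₀ < #α)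
    (hmem : ∀ A ∈ K, A.Countable ∧ A.Infinite) (hcof : IsCofinalInCountable K)
    (hK : IsKurepa K) : #{A : K // (cubePiece K r A).Nonempty} = #K := by
  choose e he using fun A : K => (hmem A A.2).1.exists_eq_range (hmem A A.2).2.nonempty
  choose g hg using fun A : K =>
    exists_mem_cubePiece K r (A := A) fun n => (he A).symm ▸ mem_range_self n
  have hsub (A : K) : (A : Set α) ⊆ g A := he A ▸ range_subset_iff.2 (hg A).1
  refine le_antisymm (mk_subtype_le _) <| mk_le_mk_of_countable_preimage
    (fun A => (⟨g A, e A, hg A⟩ : {C : K // (cubePiece K r C).Nonempty})) (fun C => ?_)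
    (hcof.aleph0_lt_mk hα fun A hA => (hmem A hA).1)
  refine (hK.countable_setOf_subset (hmem C.1 C.1.2).1).mono fun A hA => ?_
  rw [mem_preimage, mem_singleton_iff] at hA
  exact hA ▸ hsub A

theorem exists_polish_partition_mk_le [TopologicalSpace α] [DiscreteTopology α] [Infinite α]
    (hmem : ∀ A ∈ K, A.Countable) (hcof : IsCofinalInCountable K) (hK : IsKurepa K) :
    ∃ P : Set (Set (ℕ → α)),
      (∀ p ∈ P, ∀ q ∈ P, p ≠ q → Disjoint p q) ∧ (∀ p ∈ P, p.Nonempty) ∧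
      ⋃₀ P = Set.univ ∧ (∀ p ∈ P, PolishSpace p) ∧ #P ≤ #K := by
  let r : K → K → Prop := WellOrderingRel
  refine ⟨range fun A : {A : K // (cubePiece K r A).Nonempty} => cubePiece K r A, ?_, ?_, ?_, ?_,
    mk_range_le.trans (mk_subtype_le _)⟩
  · rintro _ ⟨A, rfl⟩ _ ⟨B, rfl⟩ hAB
    exact pairwise_disjoint_cubePiece K r fun h => hAB (by rw [Subtype.ext h])
  · rintro _ ⟨A, rfl⟩
    exact A.2
  · refine eq_univ_of_forall fun x => ?_
    obtain ⟨A, hxA⟩ := mem_iUnion.1 (iUnion_cubePiece K r hcof ▸ mem_univ x)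
    exact ⟨_, ⟨⟨A, x, hxA⟩, rfl⟩, hxA⟩
  · rintro _ ⟨A, rfl⟩
    exact polishSpace_cubePiece K r hK (hmem A A.1.2)

end Pieces

/-- For an uncountable discrete space α with a cofinal Kurepa family K in [α]^ω,
well-ordered by ≺, the nonempty sets Y_A = A^ω \ ⋃_{B ≺ A} B^ω are Polish
subspaces partitioning α^ω into exactly |K| pieces; consequently
par(α^ω) ≤ cf[α]^ω. -/
theorem stmt_13 {α : Type*} [TopologicalSpace α] [DiscreteTopology α]
    (hα : ℵ₀ < #α)
    (K : Set (Set α))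
    (hmem : ∀ A ∈ K, A.Countable ∧ A.Infinite)
    (hcof : ∀ X : Set α, X.Countable → X.Infinite → ∃ A ∈ K, X ⊆ A)
    (hKurepa : ∀ X : Set α, X.Countable → {Z : Set α | ∃ A ∈ K, Z = X ∩ A}.Countable)
    (r : K → K → Prop) [IsWellOrder K r]
    (Y : K → Set (ℕ → α))
    (hY : ∀ A : K, Y A = {x : ℕ → α | ∀ n, x n ∈ (A : Set α)} \
      ⋃ (B : K) (_ : r B A), {x : ℕ → α | ∀ n, x n ∈ (B : Set α)}) :
    (∀ A : K, (Y A).Nonempty → PolishSpace (Y A)) ∧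
    (∀ A B : K, A ≠ B → Disjoint (Y A) (Y B)) ∧
    (⋃ A : K, Y A) = Set.univ ∧
    #{A : K // (Y A).Nonempty} = #K ∧
    sInf {c : Cardinal | ∃ P : Set (Set (ℕ → α)),
        (∀ p ∈ P, ∀ q ∈ P, p ≠ q → Disjoint p q) ∧ (∀ p ∈ P, p.Nonempty) ∧
        ⋃₀ P = Set.univ ∧ (∀ p ∈ P, PolishSpace p) ∧ #P = c} ≤
      sInf {c : Cardinal | ∃ F : Set (Set α),
        (∀ A ∈ F, A.Countable ∧ A.Infinite) ∧
        (∀ X : Set α, X.Countable → X.Infinite → ∃ A ∈ F, X ⊆ A) ∧ #F = c} := by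
  obtain rfl : Y = cubePiece K r := funext hY
  have : Infinite α := Cardinal.infinite_iff.2 hα.le
  refine ⟨fun A _ => polishSpace_cubePiece K r hKurepa (hmem A A.2).1,
    fun A B hAB => pairwise_disjoint_cubePiece K r hAB, iUnion_cubePiece K r hcof,
    mk_setOf_cubePiece_nonempty K r hα hmem hcof hKurepa, le_csInf ⟨#K, K, hmem, hcof, rfl⟩ ?_⟩
  rintro _ ⟨F, hFmem, hFcof, rfl⟩
  obtain ⟨K', hK'K, hK'cof, hK'F⟩ := IsCofinalInCountable.exists_subset_mk_le hcof hFcof hFmem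
  obtain ⟨P, hPdisj, hPne, hPcov, hPpolish, hPK'⟩ := exists_polish_partition_mk_le K'
    (fun A hA => (hmem A (hK'K hA)).1) hK'cof (IsKurepa.mono hKurepa hK'K)
  refine (csInf_le' ?_).trans (hPK'.trans hK'F)
  exact ⟨P, hPdisj, hPne, hPcov, hPpolish, rfl⟩
end

section
/- If κ is an uncountable cardinal such that κ^ω (κ discrete, product topology) admits a partition into κ Polish subspaces, and there is a continuous bijection from κ^ω onto some compact metric space, then ℝ can be partitioned into κ Borel sets. -/
open Cardinal Set

/-- If α is an uncountable discrete space such that α^ω admits a partition into |α|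
Polish subspaces, and there is a continuous bijection from α^ω onto a compact
metric space, then ℝ can be partitioned into |α| Borel sets. -/
theorem stmt_16 {α : Type u} [TopologicalSpace α] [DiscreteTopology α]
    (hα : ℵ₀ < #α)
    (P : Set (Set (ℕ → α)))
    (hdisj : ∀ p ∈ P, ∀ q ∈ P, p ≠ q → Disjoint p q)
    (hne : ∀ p ∈ P, p.Nonempty)
    (hcover : ⋃₀ P = Set.univ)
    (hPol : ∀ p ∈ P, PolishSpace p)
    (hcard : #P = #α)
    (X : Type v) [MetricSpace X] [CompactSpace X]
    (g : (ℕ → α) → X) (hg : Continuous g) (hgb : Function.Bijective g) :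
    ∃ Q : Set (Set ℝ),
      (∀ p ∈ Q, ∀ q ∈ Q, p ≠ q → Disjoint p q) ∧
      (∀ p ∈ Q, p.Nonempty ∧ MeasurableSet p) ∧
      ⋃₀ Q = Set.univ ∧ Cardinal.lift.{u} #Q = Cardinal.lift.{0} #α := by
  borelize X
  haveI : PolishSpace X := inferInstance
  haveI : Uncountable α := Cardinal.aleph0_lt_mk_iff.mp hα
  -- X is uncountable
  have huncX : ¬ Countable X := by
    intro hX
    haveI : Countable (ℕ → α) := hgb.injective.countable
    have hinj : Function.Injective (fun a : α => (fun _ : ℕ => a)) := fun a b h =>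
      congrFun h 0
    exact (not_countable (α := α)) hinj.countable
  -- the images g '' p are Borel in X
  have himg : ∀ p ∈ P, MeasurableSet (g '' p) := by
    intro p hp
    haveI := hPol p hp
    letI : MeasurableSpace p := borel p
    haveI : BorelSpace p := ⟨rfl⟩
    have hc : Continuous (fun x : p => g x) := hg.comp continuous_subtype_val
    have hi : Function.Injective (fun x : p => g x) := fun x y h => by
      ext1; exact hgb.injective h
    have := (hc.measurableEmbedding hi).measurableSet_range
    have hr : Set.range (fun x : p => g x) = g '' p := by
      ext x; simp [Set.range, Set.image]
    rwa [hr] at this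
  -- Borel isomorphism between X and ℝ
  obtain ⟨e⟩ : Nonempty (X ≃ᵐ ℝ) :=
    ⟨PolishSpace.measurableEquivOfNotCountable huncX (not_countable (α := ℝ))⟩
  set h : (ℕ → α) → ℝ := fun x => e (g x) with hh
  have hhinj : Function.Injective h := fun a b hab => hgb.injective (e.injective hab)
  have hhsurj : Function.Surjective h := fun r => by
    obtain ⟨x, hx⟩ := hgb.surjective (e.symm r)
    exact ⟨x, by simp [hh, hx]⟩
  refine ⟨(fun s => h '' s) '' P, ?_, ?_, ?_, ?_⟩
  · rintro _ ⟨p, hp, rfl⟩ _ ⟨q, hq, rfl⟩ hne'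
    have hpq : p ≠ q := by rintro rfl; exact hne' rfl
    exact (Set.disjoint_image_iff hhinj).mpr (hdisj p hp q hq hpq)
  · rintro _ ⟨p, hp, rfl⟩
    refine ⟨(hne p hp).image h, ?_⟩
    show MeasurableSet (h '' p)
    have : h '' p = e '' (g '' p) := by rw [Set.image_image]
    rw [this]
    exact e.measurableEmbedding.measurableSet_image' (himg p hp)
  · rw [Set.sUnion_image, ← Set.image_iUnion₂, ← Set.sUnion_eq_biUnion, hcover,
      Set.image_univ, hhsurj.range_eq]
  · have hQ : Nonempty (P ≃ ((fun s => h '' s) '' P : Set (Set ℝ))) := by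
      refine ⟨Equiv.Set.imageOfInjOn _ _ ?_⟩
      intro p hp q hq hpq
      exact Set.image_injective.mpr hhinj hpq
    have := (Cardinal.lift_mk_eq'.mpr hQ)
    rw [← hcard, ← this]
end

section
/- Let Γ be the pointclass of analytic (Σ¹₁) subsets of ℝ. If ℝ admits a partition into κ analytic sets for some uncountable cardinal κ, then ℝ admits a partition into κ Borel sets, and conversely; i.e., the uncountable partition spectrum of analytic sets equals that of Borel sets. -/
/-!
Write an analytic set as the range of a continuous `f : (ℕ → ℕ) → X`. For `x : X`, the finite
sequences `s` such that `x` lies in the closure of the image of the cylinder of `s` form a tree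
whose infinite branches are exactly the `y` with `f y = x` (in a regular space, closures of the
images of shrinking cylinders around `y` shrink to `f y`). Iterating the derivative that deletes
terminal nodes, the tree stabilises at a countable stage because it is countable, so `x ∈ range f`
iff for some `o < ω₁` the `o`-th derived tree contains the root and has no terminal nodes; for fixed
`o < ω₁` this is a Borel condition on `x`. Hence an analytic set is a union of `ℵ₁` Borel sets, and
refining an analytic partition of uncountable size `κ` by these gives a Borel partition of size
`κ · ℵ₁ = κ`.
-/

open Cardinal Set PiNat MeasureTheory
open scoped Ordinal

universe u

theorem Ordinal.countable_Iio_iff {o : Ordinal} : (Iio o).Countable ↔ o < ω₁ := by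
  rw [← le_aleph0_iff_set_countable, Cardinal.mk_Iio_ordinal, lift_le_aleph0, ← lt_aleph_one_iff,
    lt_omega_iff_card_lt]

theorem Ordinal.exists_lt_omega_one_succ_eq {α : Type*} [Countable α] {F : Ordinal → Set α}
    (hF : Antitone F) : ∃ o < ω₁, F (Order.succ o) = F o := by
  by_contra! hne
  have hdrop : ∀ o : Iio ω₁, ∃ a ∈ F o, a ∉ F (Order.succ o) := fun o =>
    not_subset.1 fun h => hne o o.2 ((hF (Order.le_succ _)).antisymm h)
  choose g hg hg' using hdrop
  have hg_inj : Function.Injective g := by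
    intro o o' h
    by_contra hoo'
    rcases lt_or_gt_of_ne (Subtype.coe_ne_coe.2 hoo') with hlt | hlt
    · exact hg' o (h ▸ hF (Order.succ_le_of_lt hlt) (hg o'))
    · exact hg' o' (h.symm ▸ hF (Order.succ_le_of_lt hlt) (hg o))
  have : (Iio ω₁).Countable := countable_coe_iff.1 hg_inj.countable
  exact (Ordinal.countable_Iio_iff.1 this).false

section DerivedTree

variable {α : Type*}

/-- Lists are read backwards, as in `PiNat.res`: `a :: s` is the immediate extension of `s`. -/
noncomputable def derivedTree (T : Set (List α)) (o : Ordinal) : Set (List α) :=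
  {s | s ∈ T ∧ ∀ o' < o, ∃ a, a :: s ∈ derivedTree T o'}
termination_by o
decreasing_by assumption

variable {T : Set (List α)}

theorem derivedTree_eq (T : Set (List α)) (o : Ordinal) :
    derivedTree T o = {s | s ∈ T ∧ ∀ o' < o, ∃ a, a :: s ∈ derivedTree T o'} := by
  rw [derivedTree]

theorem derivedTree_subset (o : Ordinal) : derivedTree T o ⊆ T := by
  rw [derivedTree_eq]
  exact fun _ hs => hs.1

theorem derivedTree_anti : Antitone (derivedTree T) := by
  intro o o' h s hs
  rw [derivedTree_eq] at hs ⊢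
  exact ⟨hs.1, fun o'' ho'' => hs.2 o'' (ho''.trans_le h)⟩

theorem exists_cons_mem_of_mem_derivedTree_succ {o : Ordinal} {s : List α}
    (hs : s ∈ derivedTree T (Order.succ o)) : ∃ a, a :: s ∈ derivedTree T o := by
  rw [derivedTree_eq] at hs
  exact hs.2 o (Order.lt_succ o)

theorem res_mem_derivedTree {y : ℕ → α} (hy : ∀ n, res y n ∈ T) (o : Ordinal) (n : ℕ) :
    res y n ∈ derivedTree T o := by
  induction o using WellFoundedLT.induction generalizing n with
  | _ o ih =>
    rw [derivedTree_eq]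
    exact ⟨hy n, fun o' ho' => ⟨y n, ih o' ho' (n + 1)⟩⟩

theorem measurable_mem_derivedTree [Countable α] {X : Type*} [MeasurableSpace X]
    {T : X → Set (List α)} (hT : ∀ s, Measurable fun x => s ∈ T x) {o : Ordinal} (ho : o < ω₁)
    (s : List α) : Measurable fun x => s ∈ derivedTree (T x) o := by
  induction o using WellFoundedLT.induction generalizing s with
  | _ o ih =>
    have : Countable (Iio o) := (Ordinal.countable_Iio_iff.2 ho).to_subtype
    have hrec : (fun x => s ∈ derivedTree (T x) o) =
        fun x => s ∈ T x ∧ ∀ o' : Iio o, ∃ a, a :: s ∈ derivedTree (T x) o' := by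
      ext x
      rw [derivedTree_eq]
      simp only [mem_ofPred_eq, Subtype.forall, mem_Iio]
    rw [hrec]
    exact (hT s).and <| .forall fun o' => .exists fun a => ih o' o'.2 (o'.2.trans ho) _

end DerivedTree

theorem exists_forall_res_mem {α : Type*} {S : Set (List α)} (hnil : [] ∈ S)
    (hS : ∀ s ∈ S, ∃ a, a :: s ∈ S) : ∃ y : ℕ → α, ∀ n, res y n ∈ S := by
  have : Nonempty α := (hS [] hnil).nonempty
  choose! g hg using hS
  let c : ℕ → List α := fun n => (fun s => g s :: s)^[n] []
  have hc_succ (n : ℕ) : c (n + 1) = g (c n) :: c n := Function.iterate_succ_apply' _ _ _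
  have hc_mem (n : ℕ) : c n ∈ S := by
    induction n with
    | zero => exact hnil
    | succ n ih => rw [hc_succ]; exact hg _ ih
  refine ⟨fun n => g (c n), fun n => ?_⟩
  suffices res (fun n => g (c n)) n = c n from this ▸ hc_mem n
  induction n with
  | zero => rfl
  | succ n ih => rw [res_succ, ih, hc_succ]

namespace PiNat

theorem exists_cylinder_subset {α : Type*} [TopologicalSpace α] [DiscreteTopology α]
    {y : ℕ → α} {U : Set (ℕ → α)} (hU : U ∈ nhds y) : ∃ n, cylinder y n ⊆ U := by
  obtain ⟨_, ⟨z, n, rfl⟩, hy, hsub⟩ := (isTopologicalBasis_cylinders fun _ => α).mem_nhds_iff.1 hU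
  exact ⟨n, mem_cylinder_iff_eq.1 hy ▸ hsub⟩

theorem eq_of_forall_mem_closure_image_cylinder {α X : Type*} [TopologicalSpace α]
    [DiscreteTopology α] [TopologicalSpace X] [T3Space X] {f : (ℕ → α) → X} (hf : Continuous f)
    {x : X} {y : ℕ → α} (hx : ∀ n, x ∈ closure (f '' cylinder y n)) : x = f y := by
  by_contra hne
  obtain ⟨V, hV, hVc, hVx⟩ :=
    exists_mem_nhds_isClosed_subset (isOpen_compl_singleton.mem_nhds (Ne.symm hne))
  obtain ⟨n, hn⟩ := exists_cylinder_subset (hf.continuousAt hV)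
  exact hVx (closure_minimal (image_subset_iff.2 hn) hVc (hx n)) rfl

end PiNat

section Constituents

variable {α X : Type*} [TopologicalSpace X]

def codeTree (f : (ℕ → α) → X) (x : X) : Set (List α) :=
  {s | x ∈ closure (f '' {y | res y s.length = s})}

theorem res_mem_codeTree (f : (ℕ → α) → X) (y : ℕ → α) (n : ℕ) : res y n ∈ codeTree f (f y) :=
  subset_closure ⟨y, by rw [mem_ofPred_eq, res_length], rfl⟩

theorem eq_of_forall_res_mem_codeTree [TopologicalSpace α] [DiscreteTopology α] [T3Space X]
    {f : (ℕ → α) → X} (hf : Continuous f) {x : X} {y : ℕ → α}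
    (hy : ∀ n, res y n ∈ codeTree f x) : x = f y :=
  eq_of_forall_mem_closure_image_cylinder hf fun n => by
    simpa only [cylinder_eq_res, codeTree, mem_ofPred_eq, res_length] using hy n

def constituent (f : (ℕ → α) → X) (o : Ordinal) : Set X :=
  {x | [] ∈ derivedTree (codeTree f x) o ∧
    ∀ s ∈ derivedTree (codeTree f x) o, ∃ a, a :: s ∈ derivedTree (codeTree f x) o}

theorem measurableSet_constituent [Countable α] [MeasurableSpace X] [OpensMeasurableSpace X]
    (f : (ℕ → α) → X) {o : Ordinal} (ho : o < ω₁) : MeasurableSet (constituent f o) := by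
  have hmem := measurable_mem_derivedTree (T := codeTree f)
    (fun s => isClosed_closure.measurableSet.mem) ho
  exact (hmem []).and (.forall fun s => (hmem s).imp (.exists fun a => hmem (a :: s))) |>.setOf

theorem biUnion_constituent [TopologicalSpace α] [DiscreteTopology α] [Countable α] [T3Space X]
    {f : (ℕ → α) → X} (hf : Continuous f) :
    ⋃ o < ω₁, constituent f o = range f := by
  apply Subset.antisymm
  · simp only [iUnion_subset_iff]
    rintro o - x ⟨hnil, hext⟩
    obtain ⟨y, hy⟩ := exists_forall_res_mem hnil hext
    exact ⟨y, (eq_of_forall_res_mem_codeTree hf fun n => derivedTree_subset o (hy n)).symm⟩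
  · rintro _ ⟨y, rfl⟩
    obtain ⟨o, ho, hstable⟩ :=
      Ordinal.exists_lt_omega_one_succ_eq (derivedTree_anti (T := codeTree f (f y)))
    refine mem_biUnion ho ⟨res_mem_derivedTree (res_mem_codeTree f y) o 0, fun s hs => ?_⟩
    exact exists_cons_mem_of_mem_derivedTree_succ (hstable ▸ hs)

end Constituents

theorem exists_pairwiseDisjoint_sUnion_eq_biUnion_lt_omega_one {X : Type u} [MeasurableSpace X]
    {B : Ordinal.{u} → Set X} (hB : ∀ o < ω₁, MeasurableSet (B o)) :
    ∃ D : Set (Set X), D.PairwiseDisjoint id ∧ (∀ d ∈ D, MeasurableSet d) ∧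
      ⋃₀ D = ⋃ o < ω₁, B o ∧ #D ≤ ℵ₁ := by
  set E : Ordinal → Set X := fun o => B o \ ⋃ o' < o, B o'
  have hE_disj {o o'} (h : o < o') : Disjoint (E o) (E o') :=
    disjoint_left.2 fun x hx hx' => hx'.2 (mem_biUnion h hx.1)
  refine ⟨E '' Iio ω₁, ?_, ?_, ?_, ?_⟩
  · rintro _ ⟨o, -, rfl⟩ _ ⟨o', -, rfl⟩ hne
    rcases lt_or_gt_of_ne (ne_of_apply_ne E hne) with h | h
    exacts [hE_disj h, (hE_disj h).symm]
  · rintro _ ⟨o, ho, rfl⟩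
    exact (hB o ho).diff <| .biUnion (Ordinal.countable_Iio_iff.2 ho) fun o' ho' =>
      hB o' (lt_trans ho' ho)
  · rw [sUnion_image]
    refine subset_antisymm (biUnion_mono subset_rfl fun o _ => sdiff_subset) ?_
    simp only [iUnion_subset_iff]
    intro o ho x hx
    have hmin : sInf {o | x ∈ B o} ∈ {o | x ∈ B o} := csInf_mem ⟨o, hx⟩
    have hle : sInf {o | x ∈ B o} ≤ o := csInf_le' hx
    refine mem_biUnion (hle.trans_lt ho) ⟨hmin, ?_⟩
    simp only [mem_iUnion, not_exists]
    exact fun o' ho' hx' => notMem_of_lt_csInf' ho' hx'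
  · simpa [Cardinal.mk_Iio_ordinal] using mk_image_le_lift (f := E) (s := Iio ω₁)

theorem MeasureTheory.AnalyticSet.exists_pairwiseDisjoint_measurableSet {X : Type u}
    [TopologicalSpace X] [T3Space X] [MeasurableSpace X] [OpensMeasurableSpace X] {A : Set X}
    (hA : AnalyticSet A) : ∃ D : Set (Set X), D.PairwiseDisjoint id ∧ (∀ d ∈ D, MeasurableSet d) ∧
      ⋃₀ D = A ∧ #D ≤ ℵ₁ := by
  rw [AnalyticSet_def] at hA
  rcases hA with rfl | ⟨f, hf, rfl⟩
  · exact ⟨∅, pairwiseDisjoint_empty, fun _ => False.elim, sUnion_empty, by simp⟩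
  · rw [← biUnion_constituent hf]
    exact exists_pairwiseDisjoint_sUnion_eq_biUnion_lt_omega_one fun _ =>
      measurableSet_constituent f

def IsPartitionInto {α : Type*} (Γ : Set α → Prop) (P : Set (Set α)) : Prop :=
  (∀ p ∈ P, ∀ q ∈ P, p ≠ q → Disjoint p q) ∧ (∀ p ∈ P, p.Nonempty ∧ Γ p) ∧ ⋃₀ P = Set.univ

theorem IsPartitionInto.exists_refinement {α : Type*} {Γ Δ : Set α → Prop} {P : Set (Set α)}
    {c : Cardinal} (hP : IsPartitionInto Γ P) (hc : c ≤ #P) (hP₀ : ℵ₀ ≤ #P)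
    (hdec : ∀ p, Γ p → ∃ D : Set (Set α),
      D.PairwiseDisjoint id ∧ (∀ d ∈ D, Δ d) ∧ ⋃₀ D = p ∧ #D ≤ c) :
    ∃ Q, IsPartitionInto Δ Q ∧ #Q = #P := by
  obtain ⟨hdisj, hne, hcover⟩ := hP
  choose! D hD_disj hDΔ hD_sUnion hD_card using hdec
  have hD_sub {p d} (hp : p ∈ P) (hd : d ∈ D p) : d ⊆ p :=
    hD_sUnion p (hne p hp).2 ▸ subset_sUnion_of_mem hd
  have hD_mem {p x} (hp : p ∈ P) (hx : x ∈ p) : ∃ d ∈ D p, x ∈ d := by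
    rwa [← mem_sUnion, hD_sUnion p (hne p hp).2]
  set Q := {d | d.Nonempty ∧ ∃ p ∈ P, d ∈ D p}
  refine ⟨Q, ⟨?_, ?_, ?_⟩, le_antisymm ?_ ?_⟩
  · rintro d ⟨-, p, hp, hd⟩ d' ⟨-, p', hp', hd'⟩ hne'
    obtain rfl | hpp' := eq_or_ne p p'
    · exact hD_disj p (hne p hp).2 hd hd' hne'
    · exact (hdisj p hp p' hp' hpp').mono (hD_sub hp hd) (hD_sub hp' hd')
  · rintro d ⟨hd, p, hp, hdp⟩
    exact ⟨hd, hDΔ p (hne p hp).2 d hdp⟩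
  · refine eq_univ_of_forall fun x => ?_
    obtain ⟨p, hp, hx⟩ := mem_sUnion.1 (hcover.symm ▸ mem_univ x)
    obtain ⟨d, hd, hxd⟩ := hD_mem hp hx
    exact ⟨d, ⟨⟨x, hxd⟩, p, hp, hd⟩, hxd⟩
  · calc #Q ≤ #(⋃ p ∈ P, D p) := mk_le_mk_of_subset fun d ⟨_, p, hp, hd⟩ => mem_biUnion hp hd
      _ ≤ #P * ⨆ p : P, #(D p) := mk_biUnion_le _ _
      _ ≤ #P * #P := by
        gcongr
        exact ciSup_le' fun p => (hD_card p (hne p p.2).2).trans hc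
      _ = #P := mul_eq_self hP₀
  · have hsel (p : P) : ∃ q : Q, (q : Set α) ⊆ p := by
      obtain ⟨x, hx⟩ := (hne p p.2).1
      obtain ⟨d, hd, hxd⟩ := hD_mem p.2 hx
      exact ⟨⟨d, ⟨x, hxd⟩, p, p.2, hd⟩, hD_sub p.2 hd⟩
    choose φ hφ using hsel
    refine mk_le_of_injective (f := φ) fun p p' h => Subtype.ext ?_
    by_contra hpp'
    obtain ⟨x, hx⟩ := (φ p).2.1
    exact disjoint_left.1 (hdisj p p.2 p' p'.2 hpp') (hφ p hx) (hφ p' (h ▸ hx))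

/-- For uncountable κ, ℝ can be partitioned into κ analytic sets iff it can be
partitioned into κ Borel sets. -/
theorem stmt_18 (κ : Cardinal) (hκ : ℵ₀ < κ) :
    (∃ P : Set (Set ℝ),
      (∀ p ∈ P, ∀ q ∈ P, p ≠ q → Disjoint p q) ∧
      (∀ p ∈ P, p.Nonempty ∧ MeasureTheory.AnalyticSet p) ∧
      ⋃₀ P = Set.univ ∧ #P = κ) ↔
    (∃ P : Set (Set ℝ),
      (∀ p ∈ P, ∀ q ∈ P, p ≠ q → Disjoint p q) ∧
      (∀ p ∈ P, p.Nonempty ∧ MeasurableSet p) ∧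
      ⋃₀ P = Set.univ ∧ #P = κ) := by
  constructor
  · rintro ⟨P, hdisj, hne, hcover, rfl⟩
    obtain ⟨Q, ⟨hQ_disj, hQ_ne, hQ_cover⟩, hQ⟩ :=
      IsPartitionInto.exists_refinement ⟨hdisj, hne, hcover⟩ (aleph_one_le_iff.2 hκ) hκ.le
        fun p hp => hp.exists_pairwiseDisjoint_measurableSet
    exact ⟨Q, hQ_disj, hQ_ne, hQ_cover, hQ⟩
  · rintro ⟨P, hdisj, hne, hcover, hP⟩
    exact ⟨P, hdisj, fun p hp => ⟨(hne p hp).1, (hne p hp).2.analyticSet⟩, hcover, hP⟩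
end

section
/- If there is a partition of ℝ into κ Borel sets with κ uncountable, and moreover κ ≥ 𝔞_T (the least cardinality of a partition of the Baire space ω^ω into compact sets), then there is a partition of ℝ into κ compact sets. -/
/-!
A Borel set `p ⊆ ℝ` is closed in a finer Polish topology, hence is the image of a closed set
`F ⊆ ω^ω` under a map `f` that is continuous and injective on `F`. Given a partition `𝒦` of
`ω^ω` into compact sets, the sets `f '' (K ∩ F)`, `K ∈ 𝒦`, then partition `p` into at most
`#𝒦 ≤ κ` compact sets. Doing this in each of the `κ` Borel pieces gives at least `κ` and at most
`κ · κ = κ` compact pieces.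

The parametrization comes from a Lusin scheme: starting from a closed set, split every piece
into countably many disjoint locally closed pieces of diameter `≤ 2⁻ⁿ` whose closures stay
inside it. Along a branch `x ∈ ω^ω` the pieces shrink to at most one point, and `F` is the set
of branches along which no piece is empty.
-/

open Set Function Metric TopologicalSpace Cardinal PiNat

def nonemptyBranches {X : Type*} (B : List ℕ → Set X) : Set (ℕ → ℕ) :=
  {x | ∀ n, (B (res x n)).Nonempty}

theorem isClosed_nonemptyBranches {X : Type*} (B : List ℕ → Set X) :
    IsClosed (nonemptyBranches B) := by
  refine isOpen_compl_iff.1 (isOpen_iff_forall_mem_open.2 fun x hx => ?_)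
  obtain ⟨n, hn⟩ := not_forall.1 hx
  refine ⟨cylinder x n, fun y hy hyB => hn ?_, isOpen_cylinder _ x n, self_mem_cylinder x n⟩
  rw [cylinder_eq_res] at hy
  exact hy ▸ hyB n

section Metric

variable {X : Type*} [MetricSpace X]

theorem IsOpen.exists_iUnion_small_closure_subset [SecondCountableTopology X] {U : Set X}
    (hU : IsOpen U) {ε : ℝ} (hε : 0 < ε) :
    ∃ V : ℕ → Set X, (∀ k, IsOpen (V k)) ∧ (∀ k, closure (V k) ⊆ U) ∧
      (∀ k, ∀ a ∈ V k, ∀ b ∈ V k, dist a b ≤ ε) ∧ ⋃ k, V k = U := by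
  set S := {V : Set X | IsOpen V ∧ closure V ⊆ U ∧ ∀ a ∈ V, ∀ b ∈ V, dist a b ≤ ε}
  have hS₀ : ∅ ∈ S := ⟨isOpen_empty, by simp, by simp⟩
  have hSU : ⋃₀ S = U := by
    refine subset_antisymm (sUnion_subset fun V hV => subset_closure.trans hV.2.1) fun x hx => ?_
    obtain ⟨δ, hδ, hball⟩ := Metric.isOpen_iff.1 hU x hx
    have hr : 0 < min (δ / 2) (ε / 2) := by positivity
    refine ⟨ball x (min (δ / 2) (ε / 2)), ⟨isOpen_ball, ?_, fun a ha b hb => ?_⟩,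
      mem_ball_self hr⟩
    · refine closure_ball_subset_closedBall.trans ((closedBall_subset_ball ?_).trans hball)
      linarith [min_le_left (δ / 2) (ε / 2)]
    · linarith [dist_triangle_right a b x, mem_ball.1 ha, mem_ball.1 hb,
        min_le_right (δ / 2) (ε / 2)]
  obtain ⟨T, hTc, hTS, hTU⟩ := isOpen_sUnion_countable S fun V hV => hV.1
  obtain ⟨V, hV⟩ := (hTc.insert ∅).exists_eq_range (insert_nonempty _ _)
  have hVS : ∀ k, V k ∈ S := fun k => insert_subset hS₀ hTS (hV ▸ mem_range_self k)
  refine ⟨V, fun k => (hVS k).1, fun k => (hVS k).2.1, fun k => (hVS k).2.2, ?_⟩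
  rw [← sUnion_range, ← hV, sUnion_insert, empty_union, hTU, hSU]

theorem IsLocallyClosed.exists_iUnion_small_closure_subset [SecondCountableTopology X]
    {s : Set X} (hs : IsLocallyClosed s) {ε : ℝ} (hε : 0 < ε) :
    ∃ D : ℕ → Set X, (∀ k, IsLocallyClosed (D k)) ∧ Pairwise (Disjoint on D) ∧
      ⋃ k, D k = s ∧ (∀ k, closure (D k) ⊆ s) ∧ ∀ k, ∀ a ∈ D k, ∀ b ∈ D k, dist a b ≤ ε := by
  obtain ⟨U, Z, hU, hZ, rfl⟩ := hs
  obtain ⟨V, hVo, hVU, hVε, hVcover⟩ := hU.exists_iUnion_small_closure_subset hε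
  refine ⟨fun k => disjointed V k ∩ Z, fun k => ?_, ?_, ?_, fun k => ?_, fun k a ha b hb =>
    hVε k a (disjointed_subset V k ha.1) b (disjointed_subset V k hb.1)⟩
  · show IsLocallyClosed (disjointed V k ∩ Z)
    rw [disjointed_eq_inter_compl]
    have hcompl : IsClosed (⋂ j < k, (V j)ᶜ) := isClosed_biInter fun j _ => (hVo j).isClosed_compl
    exact ((hVo k).isLocallyClosed.inter hcompl.isLocallyClosed).inter hZ.isLocallyClosed
  · exact (disjoint_disjointed V).mono fun i j h => h.mono inter_subset_left inter_subset_left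
  · rw [← iUnion_inter, iUnion_disjointed, hVcover]
  · exact (closure_inter_subset_inter_closure _ _).trans (inter_subset_inter
      ((closure_mono (disjointed_subset V k)).trans (hVU k)) hZ.closure_subset)

/-- `B l` is the piece indexed by the finite sequence `l` listed newest entry first, as in
`PiNat.res`: along a branch `x` the pieces are `B (res x n)`. -/
structure IsLusinScheme (B : List ℕ → Set X) : Prop where
  pairwise_disjoint (l : List ℕ) : Pairwise (Disjoint on fun i => B (i :: l))
  iUnion_cons (l : List ℕ) : ⋃ i, B (i :: l) = B l
  closure_cons_subset (i : ℕ) (l : List ℕ) : closure (B (i :: l)) ⊆ B l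
  dist_le (i : ℕ) (l : List ℕ) :
    ∀ a ∈ B (i :: l), ∀ b ∈ B (i :: l), dist a b ≤ (1 / 2) ^ l.length

theorem IsClosed.exists_isLusinScheme [SecondCountableTopology X] {C : Set X} (hC : IsClosed C) :
    ∃ B : List ℕ → Set X, IsLusinScheme B ∧ B [] = C := by
  choose D hDlc hDdisj hDunion hDcl hDdist using
    fun (s : {s : Set X // IsLocallyClosed s}) (n : ℕ) =>
      IsLocallyClosed.exists_iUnion_small_closure_subset s.2 (ε := (1 / 2) ^ n) (by positivity)
  let B : List ℕ → {s : Set X // IsLocallyClosed s} := fun l =>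
    l.rec ⟨C, hC.isLocallyClosed⟩ fun i l b => ⟨D b l.length i, hDlc b l.length i⟩
  exact ⟨fun l => (B l).1, ⟨fun l => hDdisj (B l) l.length, fun l => hDunion (B l) l.length,
    fun i l => hDcl (B l) l.length i, fun i l => hDdist (B l) l.length i⟩, rfl⟩

namespace IsLusinScheme

variable {B : List ℕ → Set X} (hB : IsLusinScheme B) (x : ℕ → ℕ)
include hB

theorem closure_res_succ_subset (n : ℕ) : closure (B (res x (n + 1))) ⊆ B (res x n) :=
  hB.closure_cons_subset (x n) (res x n)

theorem antitone_res : Antitone fun n => B (res x n) :=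
  antitone_nat_of_succ_le fun n => subset_closure.trans (hB.closure_res_succ_subset x n)

theorem dist_le_of_mem_res_succ {n : ℕ} {a b : X} (ha : a ∈ B (res x (n + 1)))
    (hb : b ∈ B (res x (n + 1))) : dist a b ≤ (1 / 2) ^ n := by
  simpa [res_length] using hB.dist_le (x n) (res x n) a ha b hb

theorem eq_of_forall_mem_res {a b : X} (ha : ∀ n, a ∈ B (res x n))
    (hb : ∀ n, b ∈ B (res x n)) : a = b :=
  eq_of_forall_dist_le fun _ hε =>
    let ⟨n, hn⟩ := exists_pow_lt_of_lt_one hε one_half_lt_one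
    (hB.dist_le_of_mem_res_succ x (ha (n + 1)) (hb (n + 1))).trans hn.le

theorem exists_forall_mem_res_of_mem_nonemptyBranches [CompleteSpace X]
    (hx : x ∈ nonemptyBranches B) : ∃ z, ∀ n, z ∈ B (res x n) := by
  choose w hw using fun n => hx (n + 1)
  have hw_cauchy : CauchySeq w := cauchySeq_of_le_geometric_two (C := 2) fun n => by
    have hw_succ := hB.antitone_res x (n + 1).le_succ (hw (n + 1))
    simpa [div_div_eq_mul_div, one_div, inv_pow] using hB.dist_le_of_mem_res_succ x (hw n) hw_succ
  obtain ⟨z, hz⟩ := cauchySeq_tendsto_of_complete hw_cauchy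
  refine ⟨z, fun n => hB.closure_res_succ_subset x n (mem_closure_of_tendsto hz ?_)⟩
  filter_upwards [Filter.eventually_ge_atTop n] with m hm
  exact hB.antitone_res x (Nat.succ_le_succ hm) (hw m)

theorem exists_forall_mem_res_of_mem_nil {z : X} (hz : z ∈ B []) :
    ∃ x : ℕ → ℕ, ∀ n, z ∈ B (res x n) := by
  choose! next hnext using fun l (hl : z ∈ B l) => mem_iUnion.1 ((hB.iUnion_cons l).symm ▸ hl)
  let L : ℕ → List ℕ := fun n => Nat.rec [] (fun _ l => next l :: l) n
  have hL : ∀ n, z ∈ B (L n) := fun n => Nat.rec hz (fun _ ih => hnext _ ih) n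
  have hres : ∀ n, res (fun n => next (L n)) n = L n := by
    intro n
    induction n with
    | zero => rfl
    | succ n ih => rw [res_succ, ih]
  exact ⟨_, fun n => hres n ▸ hL n⟩

variable {f : (ℕ → ℕ) → X} (hf : ∀ x ∈ nonemptyBranches B, ∀ n, f x ∈ B (res x n))
include hf

theorem continuousOn_of_forall_mem_res : ContinuousOn f (nonemptyBranches B) := by
  intro x hx
  refine Metric.tendsto_nhds.2 fun ε hε => ?_
  obtain ⟨N, hN⟩ := exists_pow_lt_of_lt_one hε one_half_lt_one
  filter_upwards [nhdsWithin_le_nhds ((isOpen_cylinder _ x (N + 1)).mem_nhds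
    (self_mem_cylinder x _)), self_mem_nhdsWithin] with y hy hyB
  rw [cylinder_eq_res] at hy
  exact (hB.dist_le_of_mem_res_succ x (hy ▸ hf y hyB _) (hf x hx _)).trans_lt hN

theorem injOn_of_forall_mem_res : InjOn f (nonemptyBranches B) := by
  intro x hx y hy hxy
  by_contra hne
  have hres : res x (firstDiff x y) = res y (firstDiff x y) :=
    res_eq_res.2 fun i hi => apply_eq_of_lt_firstDiff hi
  have hfx := hf x hx (firstDiff x y + 1)
  have hfy := hf y hy (firstDiff x y + 1)
  rw [res_succ, hres] at hfx
  rw [res_succ] at hfy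
  exact (hB.pairwise_disjoint _ (apply_firstDiff_ne hne)).ne_of_mem hfx hfy hxy

theorem image_eq_of_forall_mem_res : f '' nonemptyBranches B = B [] := by
  refine subset_antisymm (image_subset_iff.2 fun x hx => hf x hx 0) fun z hz => ?_
  obtain ⟨x, hx⟩ := hB.exists_forall_mem_res_of_mem_nil hz
  have hxB : x ∈ nonemptyBranches B := fun n => ⟨z, hx n⟩
  exact ⟨x, hxB, hB.eq_of_forall_mem_res x (hf x hxB) hx⟩

end IsLusinScheme

theorem IsLusinScheme.exists_injOn_image_eq [CompleteSpace X] [Nonempty X]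
    {B : List ℕ → Set X} (hB : IsLusinScheme B) :
    ∃ f : (ℕ → ℕ) → X, ContinuousOn f (nonemptyBranches B) ∧
      InjOn f (nonemptyBranches B) ∧ f '' nonemptyBranches B = B [] := by
  choose! f hf using fun x (hx : x ∈ nonemptyBranches B) =>
    hB.exists_forall_mem_res_of_mem_nonemptyBranches x hx
  exact ⟨f, hB.continuousOn_of_forall_mem_res hf, hB.injOn_of_forall_mem_res hf,
    hB.image_eq_of_forall_mem_res hf⟩

end Metric

theorem IsClosed.exists_isClosed_injOn_image_eq {X : Type*} [TopologicalSpace X] [PolishSpace X]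
    [Nonempty X] {C : Set X} (hC : IsClosed C) :
    ∃ F : Set (ℕ → ℕ), IsClosed F ∧
      ∃ f : (ℕ → ℕ) → X, ContinuousOn f F ∧ InjOn f F ∧ f '' F = C := by
  let := upgradeIsCompletelyMetrizable X
  obtain ⟨B, hB, rfl⟩ := hC.exists_isLusinScheme
  exact ⟨_, isClosed_nonemptyBranches B, hB.exists_injOn_image_eq⟩

theorem MeasurableSet.exists_isClosed_injOn_image_eq {X : Type*} [TopologicalSpace X]
    [PolishSpace X] [MeasurableSpace X] [BorelSpace X] {s : Set X} (hs : MeasurableSet s)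
    (hne : s.Nonempty) :
    ∃ F : Set (ℕ → ℕ), IsClosed F ∧
      ∃ f : (ℕ → ℕ) → X, ContinuousOn f F ∧ InjOn f F ∧ f '' F = s := by
  have : Nonempty X := ⟨hne.some⟩
  obtain ⟨t', ht', ht'Polish, hst', -⟩ := hs.isClopenable
  obtain ⟨F, hF, f, hf, hinj, himage⟩ :=
    @IsClosed.exists_isClosed_injOn_image_eq X t' ht'Polish _ s hst'
  exact ⟨F, hF, f, hf.mono_rng ht', hinj, himage⟩

section Partition

variable {X : Type*} [TopologicalSpace X]

def IsCompactPartition (Q : Set (Set X)) (s : Set X) : Prop :=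
  Q.PairwiseDisjoint id ∧ (∀ q ∈ Q, q.Nonempty ∧ IsCompact q) ∧ ⋃₀ Q = s

theorem isCompactPartition_range_singleton :
    IsCompactPartition (range fun x : X => {x}) univ := by
  refine ⟨?_, ?_, ?_⟩
  · rintro _ ⟨x, rfl⟩ _ ⟨y, rfl⟩ hxy
    exact disjoint_singleton.2 fun h => hxy (h ▸ rfl)
  · rintro _ ⟨x, rfl⟩
    exact ⟨singleton_nonempty x, isCompact_singleton⟩
  · exact eq_univ_of_forall fun x => ⟨{x}, mem_range_self x, rfl⟩

theorem IsCompactPartition.image_inter {α : Type*} [TopologicalSpace α] {𝒦 : Set (Set α)}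
    (h𝒦 : IsCompactPartition 𝒦 univ) {F : Set α} (hF : IsClosed F) {f : α → X}
    (hf : ContinuousOn f F) (hinj : InjOn f F) :
    IsCompactPartition ((fun K => f '' (K ∩ F)) '' {K ∈ 𝒦 | (K ∩ F).Nonempty}) (f '' F) := by
  refine ⟨?_, ?_, ?_⟩
  · rintro _ ⟨K, hK, rfl⟩ _ ⟨L, hL, rfl⟩ hne
    have hKL : Disjoint K L := h𝒦.1 hK.1 hL.1 fun h => hne (h ▸ rfl)
    exact disjoint_image_image fun a ha b hb hab =>
      hKL.ne_of_mem ha.1 hb.1 (hinj ha.2 hb.2 hab)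
  · rintro _ ⟨K, hK, rfl⟩
    exact ⟨hK.2.image f,
      ((h𝒦.2.1 K hK.1).2.inter_right hF).image_of_continuousOn (hf.mono inter_subset_right)⟩
  · refine subset_antisymm (sUnion_subset ?_) ?_
    · rintro _ ⟨K, -, rfl⟩
      exact image_mono inter_subset_right
    · rintro _ ⟨x, hx, rfl⟩
      obtain ⟨K, hK, hxK⟩ := mem_sUnion.1 (h𝒦.2.2.symm ▸ mem_univ x)
      exact ⟨_, ⟨K, ⟨hK, x, hxK, hx⟩, rfl⟩, x, ⟨hxK, hx⟩, rfl⟩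

theorem IsCompactPartition.biUnion {s : Set X} {P : Set (Set X)} (hP : P.PairwiseDisjoint id)
    (hPs : ⋃₀ P = s) {Q : Set X → Set (Set X)} (hQ : ∀ p ∈ P, IsCompactPartition (Q p) p) :
    IsCompactPartition (⋃ p ∈ P, Q p) s := by
  refine ⟨PairwiseDisjoint.biUnion ?_ fun p hp => (hQ p hp).1, ?_, ?_⟩
  · exact hP.mono_on fun p hp =>
      iSup₂_le fun q hq => (subset_sUnion_of_mem hq).trans (hQ p hp).2.2.le
  · simp only [mem_iUnion₂]
    rintro q ⟨p, hp, hq⟩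
    exact (hQ p hp).2.1 q hq
  · calc ⋃₀ ⋃ p ∈ P, Q p = ⋃ p ∈ P, ⋃₀ Q p := by simp only [sUnion_iUnion]
      _ = ⋃ p ∈ P, p := iUnion₂_congr fun p hp => (hQ p hp).2.2
      _ = s := by rw [← sUnion_eq_biUnion, hPs]

theorem IsCompactPartition.mk_biUnion_eq {P : Set (Set X)} (hP : P.PairwiseDisjoint id)
    (hPne : ∀ p ∈ P, p.Nonempty) {Q : Set X → Set (Set X)}
    (hQ : ∀ p ∈ P, IsCompactPartition (Q p) p) {κ : Cardinal} (hκ : ℵ₀ ≤ κ) (hPκ : #P = κ)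
    (hQκ : ∀ p ∈ P, #(Q p) ≤ κ) : #(⋃ p ∈ P, Q p) = κ := by
  refine le_antisymm ?_ ?_
  · calc #(⋃ p ∈ P, Q p) ≤ #P * ⨆ p : P, #(Q p) := mk_biUnion_le Q P
      _ ≤ κ * κ := mul_le_mul' hPκ.le (ciSup_le' fun p => hQκ p p.2)
      _ = κ := mul_eq_self hκ
  · have hpiece : ∀ p ∈ P, ∃ q ∈ Q p, q ⊆ p ∧ q.Nonempty := by
      intro p hp
      obtain ⟨z, hz⟩ := hPne p hp
      obtain ⟨q, hq, hzq⟩ := mem_sUnion.1 ((hQ p hp).2.2.symm ▸ hz)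
      exact ⟨q, hq, (subset_sUnion_of_mem hq).trans (hQ p hp).2.2.le, z, hzq⟩
    choose! g hgQ hgp hgne using hpiece
    have hinj : InjOn g P := fun p hp p' hp' h =>
      let ⟨z, hz⟩ := hgne p hp
      hP.elim hp hp' (not_disjoint_iff.2 ⟨z, hgp p hp hz, hgp p' hp' (h ▸ hz)⟩)
    calc κ = #(g '' P) := by rw [mk_image_eq_of_injOn g P hinj, hPκ]
      _ ≤ #(⋃ p ∈ P, Q p) :=
        mk_le_mk_of_subset (image_subset_iff.2 fun p hp => mem_biUnion hp (hgQ p hp))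

theorem exists_isCompactPartition_mk_le_of_sInf_le {κ : Cardinal}
    (h : sInf {c | ∃ 𝒦 : Set (Set X), 𝒦.PairwiseDisjoint id ∧
      (∀ K ∈ 𝒦, K.Nonempty ∧ IsCompact K) ∧ ⋃₀ 𝒦 = Set.univ ∧ #𝒦 = c} ≤ κ) :
    ∃ 𝒦 : Set (Set X), IsCompactPartition 𝒦 univ ∧ #𝒦 ≤ κ := by
  have hsingle := isCompactPartition_range_singleton (X := X)
  obtain ⟨𝒦, hdisj, hcpt, hcover, h𝒦⟩ := csInf_mem (s := {c | ∃ 𝒦 : Set (Set X),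
      𝒦.PairwiseDisjoint id ∧ (∀ K ∈ 𝒦, K.Nonempty ∧ IsCompact K) ∧ ⋃₀ 𝒦 = Set.univ ∧
        #𝒦 = c})
    ⟨_, _, hsingle.1, hsingle.2.1, hsingle.2.2, rfl⟩
  exact ⟨𝒦, ⟨hdisj, hcpt, hcover⟩, h𝒦.trans_le h⟩

end Partition

theorem MeasurableSet.exists_isCompactPartition {X : Type} [TopologicalSpace X] [PolishSpace X]
    [MeasurableSpace X] [BorelSpace X] {s : Set X} (hs : MeasurableSet s)
    {𝒦 : Set (Set (ℕ → ℕ))} (h𝒦 : IsCompactPartition 𝒦 univ) :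
    ∃ Q : Set (Set X), IsCompactPartition Q s ∧ #Q ≤ #𝒦 := by
  rcases s.eq_empty_or_nonempty with rfl | hne
  · exact ⟨∅, ⟨pairwiseDisjoint_empty, by simp, sUnion_empty⟩, by simp⟩
  obtain ⟨F, hF, f, hf, hinj, rfl⟩ := hs.exists_isClosed_injOn_image_eq hne
  exact ⟨_, h𝒦.image_inter hF hf hinj,
    mk_image_le.trans (mk_le_mk_of_subset (sep_subset _ _))⟩

/-- If ℝ can be partitioned into κ Borel sets, κ uncountable and κ ≥ 𝔞_T (the
least size of a partition of Baire space ω^ω into compact sets), then ℝ can be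
partitioned into κ compact sets. -/
theorem stmt_19 (κ : Cardinal) (hκ : ℵ₀ < κ)
    (haT : sInf {c : Cardinal | ∃ P : Set (Set (ℕ → ℕ)),
      (∀ p ∈ P, ∀ q ∈ P, p ≠ q → Disjoint p q) ∧
      (∀ p ∈ P, p.Nonempty ∧ IsCompact p) ∧
      ⋃₀ P = Set.univ ∧ #P = c} ≤ κ)
    (P : Set (Set ℝ))
    (hdisj : ∀ p ∈ P, ∀ q ∈ P, p ≠ q → Disjoint p q)
    (hP : ∀ p ∈ P, p.Nonempty ∧ MeasurableSet p)
    (hcover : ⋃₀ P = Set.univ)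
    (hcard : #P = κ) :
    ∃ Q : Set (Set ℝ),
      (∀ p ∈ Q, ∀ q ∈ Q, p ≠ q → Disjoint p q) ∧
      (∀ p ∈ Q, p.Nonempty ∧ IsCompact p) ∧
      ⋃₀ Q = Set.univ ∧ #Q = κ := by
  obtain ⟨𝒦, h𝒦, h𝒦κ⟩ := exists_isCompactPartition_mk_le_of_sInf_le haT
  choose! Q hQ hQ𝒦 using fun p (hp : p ∈ P) => (hP p hp).2.exists_isCompactPartition h𝒦
  have hQP := IsCompactPartition.biUnion hdisj hcover hQ
  refine ⟨⋃ p ∈ P, Q p, hQP.1, hQP.2.1, hQP.2.2, ?_⟩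
  exact IsCompactPartition.mk_biUnion_eq hdisj (fun p hp => (hP p hp).1) hQ hκ.le hcard
    fun p hp => (hQ𝒦 p hp).trans h𝒦κ
end
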